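/- arXiv:1706.06224 — 10 statements merged into one kernel-verified Lean document; each statement's English description precedes it below -/
import Mathlib

section
/- If the zero-curvature condition Ω = 0 holds, i.e. D₊U₋ + D₋U₊ − {U₊, U₋} = 0, then the bosonic potentials V± := i(D±U± − U±²) satisfy the classical zero-curvature condition D_{x+}V₋ − D_{x−}V₊ + [V₋, V₊] = 0, where D_{x±} := i D±². -/
/-- An even derivation of a ℤ/2-graded associative unital ℂ-algebra `A` with grading `𝒜`:
a ℂ-linear map preserving the parity of homogeneous elements and satisfying the Leibniz
rule `∂(ab) = (∂a)b + a(∂b)`. -/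
def IsEvenDerivation {A : Type*} [Ring A] [Algebra ℂ A]
    (𝒜 : ZMod 2 → Submodule ℂ A) (d : A →ₗ[ℂ] A) : Prop :=
  (∀ i : ZMod 2, ∀ a ∈ 𝒜 i, d a ∈ 𝒜 i) ∧
  ∀ a b : A, d (a * b) = d a * b + a * d b

/-- An odd derivation of a ℤ/2-graded associative unital ℂ-algebra `A` with grading `𝒜`:
a ℂ-linear map shifting parity by one and satisfying the graded Leibniz rule
`D(ab) = (Da)b + (-1)^i a (Db)` for homogeneous `a` of parity `i`. -/
def IsOddDerivation {A : Type*} [Ring A] [Algebra ℂ A]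
    (𝒜 : ZMod 2 → Submodule ℂ A) (d : A →ₗ[ℂ] A) : Prop :=
  (∀ i : ZMod 2, ∀ a ∈ 𝒜 i, d a ∈ 𝒜 (i + 1)) ∧
  ∀ i : ZMod 2, ∀ a ∈ 𝒜 i, ∀ b : A, d (a * b) = d a * b + ((-1 : ℂ) ^ i.val) • (a * d b)

/-- `θ` supercommutes with every homogeneous element: `θ a = (-1)^i a θ` for `a` of parity `i`. -/
def Supercommutes {A : Type*} [Ring A] [Algebra ℂ A]
    (𝒜 : ZMod 2 → Submodule ℂ A) (θ : A) : Prop :=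
  ∀ i : ZMod 2, ∀ a ∈ 𝒜 i, θ * a = ((-1 : ℂ) ^ i.val) • (a * θ)

lemma aux_odd_mul {A : Type*} [Ring A] [Algebra ℂ A] {𝒜 : ZMod 2 → Submodule ℂ A}
    {d : A →ₗ[ℂ] A} (hd : IsOddDerivation 𝒜 d) {x : A} (hx : x ∈ 𝒜 1) (y : A) :
    d (x * y) = d x * y - x * d y := by
  rw [hd.2 1 x hx y, show ((1:ZMod 2)).val = 1 by decide]
  simp [sub_eq_add_neg]

lemma aux_even_mul {A : Type*} [Ring A] [Algebra ℂ A] {𝒜 : ZMod 2 → Submodule ℂ A}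
    {d : A →ₗ[ℂ] A} (hd : IsOddDerivation 𝒜 d) {x : A} (hx : x ∈ 𝒜 0) (y : A) :
    d (x * y) = d x * y + x * d y := by
  rw [hd.2 0 x hx y, show ((0:ZMod 2)).val = 0 by decide]
  simp


/-- If the zero-curvature condition `D₊U₋ + D₋U₊ − {U₊,U₋} = 0` holds,
then the bosonic potentials `V± := i(D±U± − U±²)` satisfy the classical zero-curvature
condition `D_{x+}V₋ − D_{x−}V₊ + [V₋, V₊] = 0`, where `D_{x±} := i D±²`. -/
theorem stmt2 {A : Type*} [Ring A] [Algebra ℂ A]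
    (𝒜 : ZMod 2 → Submodule ℂ A) [GradedAlgebra 𝒜]
    (DP DM : A →ₗ[ℂ] A)
    (hDP : IsOddDerivation 𝒜 DP) (hDM : IsOddDerivation 𝒜 DM)
    (hanti : ∀ a, DP (DM a) + DM (DP a) = 0)
    (UP UM : A) (hUP : UP ∈ 𝒜 1) (hUM : UM ∈ 𝒜 1)
    (hΩ : DP UM + DM UP - (UP * UM + UM * UP) = 0)
    (VP VM : A)
    (hVP : VP = Complex.I • (DP UP - UP * UP))
    (hVM : VM = Complex.I • (DM UM - UM * UM)) :
    Complex.I • DP (DP VM) - Complex.I • DM (DM VP) + (VM * VP - VP * VM) = 0 := by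
  subst hVP hVM
  have h110 : (1 + 1 : ZMod 2) = 0 := by decide
  -- memberships
  have hp0 : DP UP ∈ 𝒜 0 := h110 ▸ hDP.1 1 UP hUP
  have hq0 : DP UM ∈ 𝒜 0 := h110 ▸ hDP.1 1 UM hUM
  have hr0 : DM UP ∈ 𝒜 0 := h110 ▸ hDM.1 1 UP hUP
  have hs0 : DM UM ∈ 𝒜 0 := h110 ▸ hDM.1 1 UM hUM
  -- anticommutation facts
  have h1 : DP (DM UM) = -(DM (DP UM)) := add_eq_zero_iff_eq_neg.mp (hanti UM)
  have h2 : DM (DP UP) = -(DP (DM UP)) := eq_neg_of_add_eq_zero_right (hanti UP)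
  have h3 : DP (DM (DP UM)) = -(DM (DP (DP UM))) := add_eq_zero_iff_eq_neg.mp (hanti (DP UM))
  have h4 : DM (DP (DM UP)) = -(DP (DM (DM UP))) := eq_neg_of_add_eq_zero_right (hanti (DM UP))
  -- Leibniz facts
  have hbb : DP (UM * UM) = DP UM * UM - UM * DP UM := aux_odd_mul hDP hUM UM
  have hqb : DP (DP UM * UM) = DP (DP UM) * UM + DP UM * DP UM := aux_even_mul hDP hq0 UM
  have hbq : DP (UM * DP UM) = DP UM * DP UM - UM * DP (DP UM) := aux_odd_mul hDP hUM (DP UM)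
  have haa : DM (UP * UP) = DM UP * UP - UP * DM UP := aux_odd_mul hDM hUP UP
  have hra : DM (DM UP * UP) = DM (DM UP) * UP + DM UP * DM UP := aux_even_mul hDM hr0 UP
  have har : DM (UP * DM UP) = DM UP * DM UP - UP * DM (DM UP) := aux_odd_mul hDM hUP (DM UP)
  have hab : DP (UP * UM) = DP UP * UM - UP * DP UM := aux_odd_mul hDP hUP UM
  have hba : DP (UM * UP) = DP UM * UP - UM * DP UP := aux_odd_mul hDP hUM UP
  have hab' : DM (UP * UM) = DM UP * UM - UP * DM UM := aux_odd_mul hDM hUP UM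
  have hba' : DM (UM * UP) = DM UM * UP - UM * DM UP := aux_odd_mul hDM hUM UP
  have hpb : DM (DP UP * UM) = DM (DP UP) * UM + DP UP * DM UM := aux_even_mul hDM hp0 UM
  have haq : DM (UP * DP UM) = DM UP * DP UM - UP * DM (DP UM) := aux_odd_mul hDM hUP (DP UM)
  have hqa : DM (DP UM * UP) = DM (DP UM) * UP + DP UM * DM UP := aux_even_mul hDM hq0 UP
  have hbp : DM (UM * DP UP) = DM UM * DP UP - UM * DM (DP UP) := aux_odd_mul hDM hUM (DP UP)
  -- the zero-curvature relation
  have hΩ' : DP UM + DM UP = UP * UM + UM * UP := sub_eq_zero.mp hΩ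
  have hrel : DM UP = UP * UM + UM * UP - DP UM := eq_sub_of_add_eq' hΩ'
  -- derivative of the relation by DP
  have e1 : DP (DP UM) + DP (DM UP)
      = (DP UP * UM - UP * DP UM) + (DP UM * UP - UM * DP UP) := by
    have h := congrArg (fun z => DP z) hΩ'
    simpa only [map_add, hab, hba] using h
  have he1 : DP (DM UP)
      = (DP UP * UM - UP * DP UM) + (DP UM * UP - UM * DP UP) - DP (DP UM) :=
    eq_sub_of_add_eq' e1
  -- derivative of the relation by DM
  have e2 : DM (DP UM) + DM (DM UP)
      = (DM UP * UM - UP * DM UM) + (DM UM * UP - UM * DM UP) := by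
    have h := congrArg (fun z => DM z) hΩ'
    simpa only [map_add, hab', hba'] using h
  have he2 : DM (DP UM)
      = (DM UP * UM - UP * DM UM) + (DM UM * UP - UM * DM UP) - DM (DM UP) :=
    eq_sub_of_add_eq e2
  -- second derivative identity: apply DM to e1
  have e3 := congrArg (fun z => DM z) e1
  simp only [map_add, map_sub, hpb, haq, hqa, hbp, h2, h4] at e3
  rw [← sub_eq_add_neg] at e3
  have he3 := eq_add_of_sub_eq e3
  -- now rewrite the main goal
  simp only [map_smul, map_sub, map_neg, hbb, haa, h1, h2, h3, h4, hqb, hbq, hra, har]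
  rw [he3]
  simp only [he1, he2]
  simp only [smul_sub, smul_add, smul_neg, smul_smul, smul_mul_assoc, mul_smul_comm,
    Complex.I_mul_I, neg_one_smul]
  generalize DM (DM UP) = W
  rw [hrel]
  noncomm_ring
  match_scalars <;> simp [Complex.I_sq]
end

section
/- With V± := i(D±U± − U±²) and D_{x±} := i D±², the following identity holds without any assumption on Ω := D₊U₋ + D₋U₊ − {U₊,U₋}: D_{x+}V₋ − D_{x−}V₊ + [V₋, V₊] = D₊D₋Ω + {D₊Ω, U₋} − {D₋Ω, U₊} + [D₋U₊, Ω] + U₋ΩU₊ − U₊ΩU₋ + ΩU₊U₋ − U₋U₊Ω. In particular the classical zero-curvature condition for V± holds whenever Ω = 0. -/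
/-!
Write `V± = i W±` with `W± = D±U± − U±²`. Every term on the left carries a factor `i² = −1`,
so it suffices to prove the `i`-free identity for `W±`. Both sides of that identity expand, by the
graded Leibniz rule (the `U±` are odd and their first derivatives even) and `D₊D₋ = −D₋D₊`, into
the same noncommutative polynomial in `U±` and their derivatives.
-/

section OddDerivation

variable {A : Type*} [Ring A] [Algebra ℂ A] {𝒜 : ZMod 2 → Submodule ℂ A} {D E : A →ₗ[ℂ] A}

namespace IsOddDerivation

theorem map_mem_zero (hD : IsOddDerivation 𝒜 D) {a : A} (ha : a ∈ 𝒜 1) : D a ∈ 𝒜 0 :=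
  hD.1 1 a ha

theorem map_mul_of_mem_one (hD : IsOddDerivation 𝒜 D) {a : A} (ha : a ∈ 𝒜 1) (b : A) :
    D (a * b) = D a * b - a * D b := by
  rw [hD.2 1 a ha b, show (1 : ZMod 2).val = 1 from rfl, pow_one, neg_one_smul, sub_eq_add_neg]

theorem map_mul_of_mem_zero (hD : IsOddDerivation 𝒜 D) {a : A} (ha : a ∈ 𝒜 0) (b : A) :
    D (a * b) = D a * b + a * D b := by
  rw [hD.2 0 a ha b, show (0 : ZMod 2).val = 0 from rfl, pow_zero, one_smul]

theorem map_map_mul (hD : IsOddDerivation 𝒜 D) (hE : IsOddDerivation 𝒜 E) {u : A}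
    (hu : u ∈ 𝒜 1) (v : A) :
    D (E (u * v)) = D (E u) * v + E u * D v - D u * E v + u * D (E v) := by
  rw [hE.map_mul_of_mem_one hu, map_sub, hD.map_mul_of_mem_zero (hE.map_mem_zero hu),
    hD.map_mul_of_mem_one hu]
  abel

end IsOddDerivation

theorem curvature_identity {DP DM : A →ₗ[ℂ] A}
    (hDP : IsOddDerivation 𝒜 DP) (hDM : IsOddDerivation 𝒜 DM)
    (hanti : ∀ a, DP (DM a) + DM (DP a) = 0) {UP UM : A} (hUP : UP ∈ 𝒜 1) (hUM : UM ∈ 𝒜 1) :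
    let Ω := DP UM + DM UP - (UP * UM + UM * UP)
    let WP := DP UP - UP * UP
    let WM := DM UM - UM * UM
    DP (DP WM) - DM (DM WP) + (WM * WP - WP * WM) =
      -(DP (DM Ω) + (DP Ω * UM + UM * DP Ω) - (DM Ω * UP + UP * DM Ω)
        + (DM UP * Ω - Ω * DM UP)
        + UM * Ω * UP - UP * Ω * UM + Ω * UP * UM - UM * UP * Ω) := by
  intro Ω WP WM
  have hswap : ∀ a, DP (DM a) = -DM (DP a) := fun a => eq_neg_of_add_eq_zero_left (hanti a)
  -- Second derivatives of products first: simp works inside-out and would otherwise expand the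
  -- inner product by a first-order rule, leaving an even factor the odd Leibniz rule cannot take.
  simp only [Ω, WP, WM, map_add, map_sub, hDP.map_map_mul hDP hUM,
    hDM.map_map_mul hDM hUP, hDP.map_map_mul hDM hUP, hDP.map_map_mul hDM hUM]
  simp only [hDP.map_mul_of_mem_one hUP, hDP.map_mul_of_mem_one hUM,
    hDM.map_mul_of_mem_one hUP, hDM.map_mul_of_mem_one hUM, hswap, map_neg, neg_neg]
  noncomm_ring

end OddDerivation

theorem stmt3_general {A : Type*} [Ring A] [Algebra ℂ A]
    (𝒜 : ZMod 2 → Submodule ℂ A)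
    (DP DM : A →ₗ[ℂ] A)
    (hDP : IsOddDerivation 𝒜 DP) (hDM : IsOddDerivation 𝒜 DM)
    (hanti : ∀ a, DP (DM a) + DM (DP a) = 0)
    (UP UM : A) (hUP : UP ∈ 𝒜 1) (hUM : UM ∈ 𝒜 1)
    (Ω : A) (hΩ : Ω = DP UM + DM UP - (UP * UM + UM * UP))
    (VP VM : A)
    (hVP : VP = Complex.I • (DP UP - UP * UP))
    (hVM : VM = Complex.I • (DM UM - UM * UM)) :
    (Complex.I • DP (DP VM) - Complex.I • DM (DM VP) + (VM * VP - VP * VM) =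
      DP (DM Ω) + (DP Ω * UM + UM * DP Ω) - (DM Ω * UP + UP * DM Ω)
        + (DM UP * Ω - Ω * DM UP)
        + UM * Ω * UP - UP * Ω * UM + Ω * UP * UM - UM * UP * Ω) ∧
    (Ω = 0 →
      Complex.I • DP (DP VM) - Complex.I • DM (DM VP) + (VM * VP - VP * VM) = 0) := by
  have key : Complex.I • DP (DP VM) - Complex.I • DM (DM VP) + (VM * VP - VP * VM) =
      DP (DM Ω) + (DP Ω * UM + UM * DP Ω) - (DM Ω * UP + UP * DM Ω)
        + (DM UP * Ω - Ω * DM UP)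
        + UM * Ω * UP - UP * Ω * UM + Ω * UP * UM - UM * UP * Ω := by
    have hcurv := curvature_identity hDP hDM hanti hUP hUM
    dsimp only at hcurv
    subst hΩ hVP hVM
    rw [← neg_neg (_ + _ - _), ← hcurv]
    simp only [map_smul, smul_smul, Complex.I_mul_I, smul_mul_smul_comm, neg_one_smul]
    abel
  refine ⟨key, fun hΩ0 => ?_⟩
  simpa [hΩ0] using key

/-- With `V± := i(D±U± − U±²)` and `D_{x±} := i D±²`, one has, without
any assumption on `Ω := D₊U₋ + D₋U₊ − {U₊,U₋}`:
`D_{x+}V₋ − D_{x−}V₊ + [V₋,V₊] = D₊D₋Ω + {D₊Ω,U₋} − {D₋Ω,U₊} + [D₋U₊,Ω] + U₋ΩU₊ − U₊ΩU₋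
+ ΩU₊U₋ − U₋U₊Ω`; in particular the classical zero-curvature condition for `V±` holds
whenever `Ω = 0`. -/
theorem stmt3 {A : Type*} [Ring A] [Algebra ℂ A]
    (𝒜 : ZMod 2 → Submodule ℂ A) [GradedAlgebra 𝒜]
    (DP DM : A →ₗ[ℂ] A)
    (hDP : IsOddDerivation 𝒜 DP) (hDM : IsOddDerivation 𝒜 DM)
    (hanti : ∀ a, DP (DM a) + DM (DP a) = 0)
    (UP UM : A) (hUP : UP ∈ 𝒜 1) (hUM : UM ∈ 𝒜 1)
    (Ω : A) (hΩ : Ω = DP UM + DM UP - (UP * UM + UM * UP))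
    (VP VM : A)
    (hVP : VP = Complex.I • (DP UP - UP * UP))
    (hVM : VM = Complex.I • (DM UM - UM * UM)) :
    (Complex.I • DP (DP VM) - Complex.I • DM (DM VP) + (VM * VP - VP * VM) =
      DP (DM Ω) + (DP Ω * UM + UM * DP Ω) - (DM Ω * UP + UP * DM Ω)
        + (DM UP * Ω - Ω * DM UP)
        + UM * Ω * UP - UP * Ω * UM + Ω * UP * UM - UM * UP * Ω) ∧
    (Ω = 0 →
      Complex.I • DP (DP VM) - Complex.I • DM (DM VP) + (VM * VP - VP * VM) = 0) :=
  stmt3_general 𝒜 DP DM hDP hDM hanti UP UM hUP hUM Ω hΩ VP VM hVP hVM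
end

section
/- With V± := i(D±U± − U±²), D_{x±} := i D±², and Ω := D₊U₋ + D₋U₊ − {U₊,U₋}, the mixed compatibility expressions satisfy the Lax-type identities D_{x+}U₋ − D₋V₊ + [U₋, V₊] = i(D₊Ω + [Ω, U₊]) and D_{x−}U₊ − D₊V₋ + [U₊, V₋] = i(D₋Ω + [Ω, U₋]). In particular, if Ω = 0 then D_{x+}U₋ − D₋V₊ + [U₋, V₊] = 0 and D_{x−}U₊ − D₊V₋ + [U₊, V₋] = 0. -/
private lemma odd_leib {A : Type*} [Ring A] [Algebra ℂ A]
    {𝒜 : ZMod 2 → Submodule ℂ A} {d : A →ₗ[ℂ] A}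
    (h : IsOddDerivation 𝒜 d) {a : A} (ha : a ∈ 𝒜 1) (b : A) :
    d (a * b) = d a * b - a * d b := by
  have := h.2 1 a ha b
  have hv : ((1 : ZMod 2).val) = 1 := rfl
  rw [hv, pow_one, neg_one_smul] at this
  rw [this, sub_eq_add_neg]

/-- With `V± := i(D±U± − U±²)`, `D_{x±} := i D±²` and
`Ω := D₊U₋ + D₋U₊ − {U₊,U₋}`, the mixed compatibility expressions satisfy the Lax-type
identities `D_{x+}U₋ − D₋V₊ + [U₋,V₊] = i(D₊Ω + [Ω,U₊])` and
`D_{x−}U₊ − D₊V₋ + [U₊,V₋] = i(D₋Ω + [Ω,U₋])`; in particular both vanish when `Ω = 0`. -/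
theorem stmt4 {A : Type*} [Ring A] [Algebra ℂ A]
    (𝒜 : ZMod 2 → Submodule ℂ A) [GradedAlgebra 𝒜]
    (DP DM : A →ₗ[ℂ] A)
    (hDP : IsOddDerivation 𝒜 DP) (hDM : IsOddDerivation 𝒜 DM)
    (hanti : ∀ a, DP (DM a) + DM (DP a) = 0)
    (UP UM : A) (hUP : UP ∈ 𝒜 1) (hUM : UM ∈ 𝒜 1)
    (Ω : A) (hΩ : Ω = DP UM + DM UP - (UP * UM + UM * UP))
    (VP VM : A)
    (hVP : VP = Complex.I • (DP UP - UP * UP))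
    (hVM : VM = Complex.I • (DM UM - UM * UM)) :
    (Complex.I • DP (DP UM) - DM VP + (UM * VP - VP * UM) =
      Complex.I • (DP Ω + (Ω * UP - UP * Ω))) ∧
    (Complex.I • DM (DM UP) - DP VM + (UP * VM - VM * UP) =
      Complex.I • (DM Ω + (Ω * UM - UM * Ω))) ∧
    (Ω = 0 →
      Complex.I • DP (DP UM) - DM VP + (UM * VP - VP * UM) = 0 ∧
      Complex.I • DM (DM UP) - DP VM + (UP * VM - VM * UP) = 0) := by
  subst hΩ hVP hVM
  have hPPM := odd_leib hDP hUP UM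
  have hPMP := odd_leib hDP hUM UP
  have hPPP := odd_leib hDP hUP UP
  have hPMM := odd_leib hDP hUM UM
  have hMPM := odd_leib hDM hUP UM
  have hMMP := odd_leib hDM hUM UP
  have hMPP := odd_leib hDM hUP UP
  have hMMM := odd_leib hDM hUM UM
  have hA1 : DM (DP UP) = -(DP (DM UP)) := eq_neg_of_add_eq_zero_right (hanti UP)
  have hA2 : DP (DM UM) = -(DM (DP UM)) := eq_neg_of_add_eq_zero_left (hanti UM)
  have key1 : Complex.I • DP (DP UM) -
      DM (Complex.I • (DP UP - UP * UP)) +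
      (UM * (Complex.I • (DP UP - UP * UP)) -
        (Complex.I • (DP UP - UP * UP)) * UM) =
      Complex.I • (DP (DP UM + DM UP - (UP * UM + UM * UP)) +
        ((DP UM + DM UP - (UP * UM + UM * UP)) * UP -
          UP * (DP UM + DM UP - (UP * UM + UM * UP)))) := by
    simp only [map_smul, map_add, map_sub, mul_smul_comm, smul_mul_assoc,
      hPPM, hPMP, hPPP, hMPP, hA1, mul_sub, sub_mul, mul_add, add_mul, mul_assoc]
    module
  have key2 : Complex.I • DM (DM UP) -
      DP (Complex.I • (DM UM - UM * UM)) +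
      (UP * (Complex.I • (DM UM - UM * UM)) -
        (Complex.I • (DM UM - UM * UM)) * UP) =
      Complex.I • (DM (DP UM + DM UP - (UP * UM + UM * UP)) +
        ((DP UM + DM UP - (UP * UM + UM * UP)) * UM -
          UM * (DP UM + DM UP - (UP * UM + UM * UP)))) := by
    simp only [map_smul, map_add, map_sub, mul_smul_comm, smul_mul_assoc,
      hMPM, hMMP, hMMM, hPMM, hA2, mul_sub, sub_mul, mul_add, add_mul, mul_assoc]
    module
  refine ⟨key1, key2, fun h0 => ?_⟩
  constructor
  · rw [key1, h0]; simp
  · rw [key2, h0]; simp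
end

section
/- Suppose D± := D_{θ±} − iθ±D_{x±} satisfy D±² = −iD_{x±} and D₊D₋ + D₋D₊ = 0 as operators, and suppose the zero-curvature condition Ω := D₊U₋ + D₋U₊ − {U₊, U₋} = 0 holds. Then, with V± := i(D±U± − U±²) and W± := U± + iθ±V±, the fermionic-variable zero-curvature condition holds: D_{θ+}W₋ + D_{θ−}W₊ − {W₊, W₋} = 0. -/
section helpers
variable {A : Type*} [Ring A] [Algebra ℂ A] {𝒜 : ZMod 2 → Submodule ℂ A}
variable {θ : A} {T X : A →ₗ[ℂ] A} {D : A → A}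

lemma D_add (hD : ∀ a, D a = T a - Complex.I • (θ * X a)) (a b : A) :
    D (a + b) = D a + D b := by
  simp only [hD, map_add, mul_add, smul_add]; abel

lemma D_smul (hD : ∀ a, D a = T a - Complex.I • (θ * X a)) (c : ℂ) (a : A) :
    D (c • a) = c • D a := by
  simp only [hD, map_smul, smul_sub, mul_smul_comm, smul_comm c Complex.I]

lemma D_sub (hD : ∀ a, D a = T a - Complex.I • (θ * X a)) (a b : A) :
    D (a - b) = D a - D b := by
  simp only [hD, map_sub, mul_sub, smul_sub]; abel

lemma D_neg (hD : ∀ a, D a = T a - Complex.I • (θ * X a)) (a : A) :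
    D (-a) = - D a := by
  simp only [hD, map_neg, mul_neg, smul_neg]; abel

-- graded Leibniz for D, odd case
lemma D_leib1 (hT : IsOddDerivation 𝒜 T) (hX : IsEvenDerivation 𝒜 X)
    (hθc : Supercommutes 𝒜 θ) (hD : ∀ a, D a = T a - Complex.I • (θ * X a))
    {a : A} (ha : a ∈ 𝒜 1) (b : A) : D (a * b) = D a * b - a * D b := by
  have hT' := hT.2 1 a ha b
  have hX' := hX.2 a b
  have hc := hθc 1 a ha
  have h1 : ((1 : ZMod 2).val) = 1 := by decide
  rw [h1, pow_one] at hT' hc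
  rw [hD, hD, hD, hT', hX', mul_add, ← mul_assoc θ a (X b), hc]
  simp only [neg_smul, one_smul, smul_mul_assoc, mul_smul_comm, mul_assoc, smul_add,
    smul_sub, smul_neg, neg_mul, mul_neg, sub_mul, add_mul, mul_sub, mul_add, smul_smul]
  module

-- graded Leibniz for D, even case
lemma D_leib0 (hT : IsOddDerivation 𝒜 T) (hX : IsEvenDerivation 𝒜 X)
    (hθc : Supercommutes 𝒜 θ) (hD : ∀ a, D a = T a - Complex.I • (θ * X a))
    {a : A} (ha : a ∈ 𝒜 0) (b : A) : D (a * b) = D a * b + a * D b := by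
  have hT' := hT.2 0 a ha b
  have hX' := hX.2 a b
  have hc := hθc 0 a ha
  have h1 : ((0 : ZMod 2).val) = 0 := by decide
  rw [h1, pow_zero, one_smul] at hT' hc
  rw [hD, hD, hD, hT', hX', mul_add, ← mul_assoc θ a (X b), hc]
  simp only [one_smul, smul_mul_assoc, mul_smul_comm, mul_assoc, smul_add,
    smul_sub, smul_neg, neg_mul, mul_neg, sub_mul, add_mul, mul_sub, mul_add, smul_smul]
  module

-- cancel -I • on both sides
lemma smul_I_cancel {x y : A} (h : (-Complex.I) • x = (-Complex.I) • y) : x = y := by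
  have := congrArg (fun z => (Complex.I) • z) h
  simpa only [smul_smul, mul_neg, Complex.I_mul_I, neg_neg, one_smul] using this

end helpers

section keys
variable {A : Type*} [Ring A] [Algebra ℂ A] {𝒜 : ZMod 2 → Submodule ℂ A}

lemma XD_comm {D D' : A → A} {X : A →ₗ[ℂ] A}
    (hDneg : ∀ a, D (-a) = -D a) (hD'smul : ∀ (c : ℂ) a, D' (c • a) = c • D' a)
    (hD2 : ∀ a, D (D a) = (-Complex.I) • X a)
    (hanti : ∀ a, D (D' a) + D' (D a) = 0) (a : A) :
    X (D' a) = D' (X a) := by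
  apply smul_I_cancel
  have h1 : D (D' a) = -(D' (D a)) := eq_neg_of_add_eq_zero_left (hanti a)
  calc (-Complex.I) • X (D' a) = D (D (D' a)) := (hD2 _).symm
    _ = D' (D (D a)) := by
        rw [h1, hDneg, eq_neg_of_add_eq_zero_left (hanti (D a)), neg_neg]
    _ = D' ((-Complex.I) • X a) := by rw [hD2]
    _ = (-Complex.I) • D' (X a) := hD'smul _ _

lemma star_key {θP θM : A} {TP TM XP XM : A →ₗ[ℂ] A}
    {DP DM : A → A} {UP UM VP : A}
    (hθPc : Supercommutes 𝒜 θP) (hθMc : Supercommutes 𝒜 θM)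
    (hTP : IsOddDerivation 𝒜 TP) (hTM : IsOddDerivation 𝒜 TM)
    (hXP : IsEvenDerivation 𝒜 XP) (hXM : IsEvenDerivation 𝒜 XM)
    (hUP : UP ∈ 𝒜 1) (hUM : UM ∈ 𝒜 1)
    (hDP : ∀ a, DP a = TP a - Complex.I • (θP * XP a))
    (hDM : ∀ a, DM a = TM a - Complex.I • (θM * XM a))
    (hDP2 : ∀ a, DP (DP a) = (-Complex.I) • XP a)
    (hanti : ∀ a, DP (DM a) + DM (DP a) = 0)
    (hΩ : DP UM + DM UP - (UP * UM + UM * UP) = 0)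
    (hDPUP : DP UP = UP * UP - Complex.I • VP) :
    DM VP = XP UM - (VP * UM - UM * VP) := by
  have hDPUM : DP UM = UP * UM + UM * UP - DM UP :=
    eq_sub_of_add_eq (sub_eq_zero.mp hΩ)
  have h3 : DP (UP * UM) = DP UP * UM - UP * DP UM := D_leib1 hTP hXP hθPc hDP hUP UM
  have h4 : DP (UM * UP) = DP UM * UP - UM * DP UP := D_leib1 hTP hXP hθPc hDP hUM UP
  have h5 : DP (DM UP) = -(DM (DP UP)) := eq_neg_of_add_eq_zero_left (hanti UP)
  have h7 : DM (UP * UP) = DM UP * UP - UP * DM UP := D_leib1 hTM hXM hθMc hDM hUP UP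
  have h6 : DM (DP UP) = (DM UP * UP - UP * DM UP) - Complex.I • DM VP := by
    rw [hDPUP, D_sub hDM, D_smul hDM, h7]
  have H : (-Complex.I) • XP UM = (-Complex.I) • (DM VP + (VP * UM - UM * VP)) := by
    calc (-Complex.I) • XP UM = DP (DP UM) := (hDP2 UM).symm
      _ = DP (UP * UM + UM * UP - DM UP) := by rw [← hDPUM]
      _ = DP (UP * UM) + DP (UM * UP) - DP (DM UP) := by rw [D_sub hDP, D_add hDP]
      _ = (-Complex.I) • (DM VP + (VP * UM - UM * VP)) := by
          rw [h3, h4, h5, h6, hDPUM, hDPUP]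
          simp only [sub_mul, add_mul, mul_sub, mul_add, smul_mul_assoc, mul_smul_comm,
            mul_assoc, smul_add, smul_sub, smul_neg, neg_smul, neg_mul, mul_neg, smul_smul,
            neg_sub, sub_neg_eq_add, neg_neg, neg_add_rev]
          module
  have := smul_I_cancel H
  rw [this]; abel

end keys

section keys2
variable {A : Type*} [Ring A] [Algebra ℂ A] {𝒜 : ZMod 2 → Submodule ℂ A}

lemma E_key {θM : A} {TM XP XM : A →ₗ[ℂ] A} {DM : A → A} {UM VP VM : A}
    (hθMc : Supercommutes 𝒜 θM)
    (hTM : IsOddDerivation 𝒜 TM) (hXM : IsEvenDerivation 𝒜 XM)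
    (hXP : IsEvenDerivation 𝒜 XP)
    (hUM : UM ∈ 𝒜 1) (hVP0 : VP ∈ 𝒜 0)
    (hDM : ∀ a, DM a = TM a - Complex.I • (θM * XM a))
    (hDM2 : ∀ a, DM (DM a) = (-Complex.I) • XM a)
    (comm : ∀ a, XP (DM a) = DM (XP a))
    (hS1 : DM VP = XP UM - (VP * UM - UM * VP))
    (hDMUM : DM UM = UM * UM - Complex.I • VM) :
    XM VP = XP VM - (VP * VM - VM * VP) := by
  have l1 : DM (VP * UM) = DM VP * UM + VP * DM UM := D_leib0 hTM hXM hθMc hDM hVP0 UM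
  have l2 : DM (UM * VP) = DM UM * VP - UM * DM VP := D_leib1 hTM hXM hθMc hDM hUM VP
  apply smul_I_cancel
  calc (-Complex.I) • XM VP = DM (DM VP) := (hDM2 VP).symm
    _ = DM (XP UM) - (DM (VP * UM) - DM (UM * VP)) := by rw [hS1, D_sub hDM, D_sub hDM]
    _ = (-Complex.I) • (XP VM - (VP * VM - VM * VP)) := by
        rw [l1, l2, ← comm UM, hDMUM, map_sub, map_smul, hXP.2 UM UM, hS1]
        simp only [sub_mul, add_mul, mul_sub, mul_add, smul_mul_assoc, mul_smul_comm,
          mul_assoc, smul_add, smul_sub, smul_neg, neg_smul, neg_mul, mul_neg, smul_smul,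
          neg_sub, sub_neg_eq_add, neg_neg, neg_add_rev]
        module

end keys2

/-- Suppose `D± := D_{θ±} − iθ±D_{x±}` satisfy `D±² = −iD_{x±}` and
`D₊D₋ + D₋D₊ = 0` as operators, and the zero-curvature condition
`Ω := D₊U₋ + D₋U₊ − {U₊,U₋} = 0` holds. Then, with `V± := i(D±U± − U±²)` and
`W± := U± + iθ±V±`, the fermionic-variable zero-curvature condition holds:
`D_{θ+}W₋ + D_{θ−}W₊ − {W₊,W₋} = 0`. -/
theorem stmt6 {A : Type*} [Ring A] [Algebra ℂ A]
    (𝒜 : ZMod 2 → Submodule ℂ A) [GradedAlgebra 𝒜]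
    (θP θM : A) (hθP : θP ∈ 𝒜 1) (hθM : θM ∈ 𝒜 1)
    (hθPsq : θP * θP = 0) (hθMsq : θM * θM = 0)
    (hθPc : Supercommutes 𝒜 θP) (hθMc : Supercommutes 𝒜 θM)
    (TP TM : A →ₗ[ℂ] A)
    (hTP : IsOddDerivation 𝒜 TP) (hTM : IsOddDerivation 𝒜 TM)
    (hTPθ : TP θM = 0) (hTMθ : TM θP = 0)
    (XP XM : A →ₗ[ℂ] A)
    (hXP : IsEvenDerivation 𝒜 XP) (hXM : IsEvenDerivation 𝒜 XM)
    (UP UM : A) (hUP : UP ∈ 𝒜 1) (hUM : UM ∈ 𝒜 1)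
    (DP DM : A → A)
    (hDP : ∀ a, DP a = TP a - Complex.I • (θP * XP a))
    (hDM : ∀ a, DM a = TM a - Complex.I • (θM * XM a))
    (hDP2 : ∀ a, DP (DP a) = (-Complex.I) • XP a)
    (hDM2 : ∀ a, DM (DM a) = (-Complex.I) • XM a)
    (hanti : ∀ a, DP (DM a) + DM (DP a) = 0)
    (hΩ : DP UM + DM UP - (UP * UM + UM * UP) = 0)
    (VP VM WP WM : A)
    (hVP : VP = Complex.I • (DP UP - UP * UP))
    (hVM : VM = Complex.I • (DM UM - UM * UM))
    (hWP : WP = UP + Complex.I • (θP * VP))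
    (hWM : WM = UM + Complex.I • (θM * VM)) :
    TP WM + TM WP - (WP * WM + WM * WP) = 0 := by
  have one1 : ((1 : ZMod 2).val) = 1 := by decide
  have h20 : (1 + 1 : ZMod 2) = 0 := by decide
  -- parities of VP, VM
  have hVP0 : VP ∈ 𝒜 0 := by
    rw [hVP, hDP]
    refine Submodule.smul_mem _ _ (sub_mem (sub_mem ?_ (Submodule.smul_mem _ _ ?_)) ?_)
    · have := hTP.1 1 UP hUP; rwa [h20] at this
    · have := SetLike.mul_mem_graded hθP (hXP.1 1 UP hUP); rwa [h20] at this
    · have := SetLike.mul_mem_graded hUP hUP; rwa [h20] at this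
  have hVM0 : VM ∈ 𝒜 0 := by
    rw [hVM, hDM]
    refine Submodule.smul_mem _ _ (sub_mem (sub_mem ?_ (Submodule.smul_mem _ _ ?_)) ?_)
    · have := hTM.1 1 UM hUM; rwa [h20] at this
    · have := SetLike.mul_mem_graded hθM (hXM.1 1 UM hUM); rwa [h20] at this
    · have := SetLike.mul_mem_graded hUM hUM; rwa [h20] at this
  -- values of D on U
  have hDPUP : DP UP = UP * UP - Complex.I • VP := by
    rw [hVP, smul_smul, Complex.I_mul_I, neg_one_smul]; abel
  have hDMUM : DM UM = UM * UM - Complex.I • VM := by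
    rw [hVM, smul_smul, Complex.I_mul_I, neg_one_smul]; abel
  -- star identities
  have hS1 : DM VP = XP UM - (VP * UM - UM * VP) :=
    star_key hθPc hθMc hTP hTM hXP hXM hUP hUM hDP hDM hDP2 hanti hΩ hDPUP
  have hΩ' : DM UP + DP UM - (UM * UP + UP * UM) = 0 := by
    rw [add_comm (DM UP) (DP UM), add_comm (UM * UP) (UP * UM)]; exact hΩ
  have hanti' : ∀ a, DM (DP a) + DP (DM a) = 0 := fun a => by rw [add_comm]; exact hanti a
  have hS2 : DP VM = XM UP - (VM * UP - UP * VM) :=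
    star_key hθMc hθPc hTM hTP hXM hXP hUM hUP hDM hDP hDM2 hanti' hΩ' hDMUM
  -- commutation and the E identity
  have hcomm : ∀ a, XP (DM a) = DM (XP a) :=
    fun a => XD_comm (D_neg hDP) (D_smul hDM) hDP2 hanti a
  have hE : XM VP = XP VM - (VP * VM - VM * VP) :=
    E_key hθMc hTM hXM hXP hUM hVP0 hDM hDM2 hcomm hS1 hDMUM
  -- express T in terms of D
  have hTPVM : TP VM = DP VM + Complex.I • (θP * XP VM) := by rw [hDP]; abel
  have hTMVP : TM VP = DM VP + Complex.I • (θM * XM VP) := by rw [hDM]; abel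
  have hTPUM : TP UM = DP UM + Complex.I • (θP * XP UM) := by rw [hDP]; abel
  have hTMUP : TM UP = DM UP + Complex.I • (θM * XM UP) := by rw [hDM]; abel
  have hDPUM : DP UM = UP * UM + UM * UP - DM UP :=
    eq_sub_of_add_eq (sub_eq_zero.mp hΩ)
  -- T on θ·V products
  have eTP : TP (θM * VM) = -(θM * TP VM) := by
    have h := hTP.2 1 θM hθM VM
    simp only [one1, pow_one, hTPθ, zero_mul, zero_add, neg_smul, one_smul] at h
    exact h
  have eTM : TM (θP * VP) = -(θP * TM VP) := by
    have h := hTM.2 1 θP hθP VP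
    simp only [one1, pow_one, hTMθ, zero_mul, zero_add, neg_smul, one_smul] at h
    exact h
  -- supercommutation swap rules
  have cUPθM : UP * θM = -(θM * UP) := by
    have h := hθMc 1 UP hUP
    simp only [one1, pow_one, neg_smul, one_smul] at h
    rw [h]; abel
  have cUMθP : UM * θP = -(θP * UM) := by
    have h := hθPc 1 UM hUM
    simp only [one1, pow_one, neg_smul, one_smul] at h
    rw [h]; abel
  have cVPθM : VP * θM = θM * VP := by
    have h := hθMc 0 VP hVP0
    simpa using h.symm
  have cVMθP : VM * θP = θP * VM := by
    have h := hθPc 0 VM hVM0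
    simpa using h.symm
  have cθMθP : θM * θP = -(θP * θM) := by
    have h := hθPc 1 θM hθM
    simp only [one1, pow_one, neg_smul, one_smul] at h
    rw [h]; abel
  -- general-x swap rules
  have swUPθM : ∀ x, UP * (θM * x) = -(θM * (UP * x)) := fun x => by
    rw [← mul_assoc, cUPθM, neg_mul, mul_assoc]
  have swUMθP : ∀ x, UM * (θP * x) = -(θP * (UM * x)) := fun x => by
    rw [← mul_assoc, cUMθP, neg_mul, mul_assoc]
  have swVPθM : ∀ x, VP * (θM * x) = θM * (VP * x) := fun x => by
    rw [← mul_assoc, cVPθM, mul_assoc]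
  have swVMθP : ∀ x, VM * (θP * x) = θP * (VM * x) := fun x => by
    rw [← mul_assoc, cVMθP, mul_assoc]
  have swθMθP : ∀ x, θM * (θP * x) = -(θP * (θM * x)) := fun x => by
    rw [← mul_assoc, cθMθP, neg_mul, mul_assoc]
  -- final assembly
  rw [hWP, hWM, map_add, map_add, map_smul, map_smul, eTP, eTM, hTPVM, hTMVP, hTPUM,
    hTMUP, hS1, hS2, hE, hDPUM]
  simp only [mul_add, add_mul, mul_sub, sub_mul, smul_add, smul_sub, smul_neg, neg_smul,
    mul_neg, neg_mul, smul_smul, smul_mul_assoc, mul_smul_comm, mul_assoc,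
    swUPθM, swUMθP, swVPθM, swVMθP, swθMθP, cUPθM, cUMθP, cVPθM, cVMθP, cθMθP,
    Complex.I_mul_I, neg_neg, one_smul, neg_one_smul, neg_sub, sub_neg_eq_add, neg_add_rev]
  module
end

section
/- Let Ψ ∈ A₀ be invertible with D±Ψ = U±Ψ, D_{x±}Ψ = V±Ψ and D_{θ±}Ψ = W±Ψ, and let S ∈ A₀ (a bosonic gauge). Then the gauge-deformed immersion function F := Ψ⁻¹SΨ satisfies D±F = Ψ⁻¹(D±S + [S, U±])Ψ, D_{x±}F = Ψ⁻¹(D_{x±}S + [S, V±])Ψ, and D_{θ±}F = Ψ⁻¹(D_{θ±}S + [S, W±])Ψ; that is, F solves the tangent-vector equations of the bosonic Fokas–Gel'fand immersion formula with deformation matrices A± = D±S + [S,U±], B± = D_{x±}S + [S,V±], C± = D_{θ±}S + [S,W±]. -/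
private lemma key_step {A : Type*} [Ring A] [Algebra ℂ A]
    (Ψ Ψi F S dΨ dF dS M : A) (hΨΨi : Ψ * Ψi = 1) (hΨiΨ : Ψi * Ψ = 1)
    (hF : F = Ψi * S * Ψ) (hdΨ : dΨ = M * Ψ)
    (heq : dΨ * F + Ψ * dF = dS * Ψ + S * dΨ) :
    dF = Ψi * (dS + (S * M - M * S)) * Ψ := by
  have hΨF : Ψ * F = S * Ψ := by
    rw [hF]; calc Ψ * (Ψi * S * Ψ) = (Ψ * Ψi) * (S * Ψ) := by noncomm_ring
    _ = S * Ψ := by rw [hΨΨi, one_mul]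
  have h2 : Ψ * dF = dS * Ψ + S * M * Ψ - M * S * Ψ := by
    have : M * Ψ * F = M * S * Ψ := by rw [mul_assoc, hΨF, ← mul_assoc]
    rw [hdΨ] at heq
    linear_combination (norm := noncomm_ring) heq - this
  calc dF = (Ψi * Ψ) * dF := by rw [hΨiΨ, one_mul]
  _ = Ψi * (Ψ * dF) := by noncomm_ring
  _ = Ψi * (dS * Ψ + S * M * Ψ - M * S * Ψ) := by rw [h2]
  _ = Ψi * (dS + (S * M - M * S)) * Ψ := by noncomm_ring

private lemma odd_case {A : Type*} [Ring A] [Algebra ℂ A]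
    (𝒜 : ZMod 2 → Submodule ℂ A) (D : A →ₗ[ℂ] A) (hD : IsOddDerivation 𝒜 D)
    (U Ψ Ψi S F : A) (hΨ0 : Ψ ∈ 𝒜 0) (hS : S ∈ 𝒜 0)
    (hΨΨi : Ψ * Ψi = 1) (hΨiΨ : Ψi * Ψ = 1)
    (hΨD : D Ψ = U * Ψ) (hF : F = Ψi * S * Ψ) :
    D F = Ψi * (D S + (S * U - U * S)) * Ψ := by
  have hΨF : Ψ * F = S * Ψ := by
    rw [hF]; calc Ψ * (Ψi * S * Ψ) = (Ψ * Ψi) * (S * Ψ) := by noncomm_ring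
    _ = S * Ψ := by rw [hΨΨi, one_mul]
  have h1 := hD.2 0 Ψ hΨ0 F
  have h2 := hD.2 0 S hS Ψ
  rw [hΨF, h2] at h1
  simp only [ZMod.val_zero, pow_zero, one_smul] at h1
  exact key_step Ψ Ψi F S (D Ψ) (D F) (D S) U hΨΨi hΨiΨ hF hΨD h1.symm

private lemma even_case {A : Type*} [Ring A] [Algebra ℂ A]
    (𝒜 : ZMod 2 → Submodule ℂ A) (D : A →ₗ[ℂ] A) (hD : IsEvenDerivation 𝒜 D)
    (U Ψ Ψi S F : A)
    (hΨΨi : Ψ * Ψi = 1) (hΨiΨ : Ψi * Ψ = 1)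
    (hΨD : D Ψ = U * Ψ) (hF : F = Ψi * S * Ψ) :
    D F = Ψi * (D S + (S * U - U * S)) * Ψ := by
  have hΨF : Ψ * F = S * Ψ := by
    rw [hF]; calc Ψ * (Ψi * S * Ψ) = (Ψ * Ψi) * (S * Ψ) := by noncomm_ring
    _ = S * Ψ := by rw [hΨΨi, one_mul]
  have h1 := hD.2 Ψ F
  have h2 := hD.2 S Ψ
  rw [hΨF, h2] at h1
  exact key_step Ψ Ψi F S (D Ψ) (D F) (D S) U hΨΨi hΨiΨ hF hΨD h1.symm

/-- Bosonic gauge deformation: if `Ψ ∈ A₀` is invertible and satisfies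
the three linear spectral problems `D±Ψ = U±Ψ`, `D_{x±}Ψ = V±Ψ`, `D_{θ±}Ψ = W±Ψ`, and
`S ∈ A₀`, then `F := Ψ⁻¹SΨ` satisfies `D±F = Ψ⁻¹(D±S + [S,U±])Ψ`,
`D_{x±}F = Ψ⁻¹(D_{x±}S + [S,V±])Ψ` and `D_{θ±}F = Ψ⁻¹(D_{θ±}S + [S,W±])Ψ`. -/
theorem stmt10 {A : Type*} [Ring A] [Algebra ℂ A]
    (𝒜 : ZMod 2 → Submodule ℂ A) [GradedAlgebra 𝒜]
    (DP DM TP TM XP XM : A →ₗ[ℂ] A)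
    (hDP : IsOddDerivation 𝒜 DP) (hDM : IsOddDerivation 𝒜 DM)
    (hTP : IsOddDerivation 𝒜 TP) (hTM : IsOddDerivation 𝒜 TM)
    (hXP : IsEvenDerivation 𝒜 XP) (hXM : IsEvenDerivation 𝒜 XM)
    (UP UM WP WM : A) (hUP : UP ∈ 𝒜 1) (hUM : UM ∈ 𝒜 1)
    (hWP : WP ∈ 𝒜 1) (hWM : WM ∈ 𝒜 1)
    (VP VM : A) (hVP : VP ∈ 𝒜 0) (hVM : VM ∈ 𝒜 0)
    (Ψ Ψi : A) (hΨ0 : Ψ ∈ 𝒜 0) (hΨΨi : Ψ * Ψi = 1) (hΨiΨ : Ψi * Ψ = 1)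
    (hΨDP : DP Ψ = UP * Ψ) (hΨDM : DM Ψ = UM * Ψ)
    (hΨXP : XP Ψ = VP * Ψ) (hΨXM : XM Ψ = VM * Ψ)
    (hΨTP : TP Ψ = WP * Ψ) (hΨTM : TM Ψ = WM * Ψ)
    (S : A) (hS : S ∈ 𝒜 0)
    (F : A) (hF : F = Ψi * S * Ψ) :
    DP F = Ψi * (DP S + (S * UP - UP * S)) * Ψ ∧
    DM F = Ψi * (DM S + (S * UM - UM * S)) * Ψ ∧
    XP F = Ψi * (XP S + (S * VP - VP * S)) * Ψ ∧
    XM F = Ψi * (XM S + (S * VM - VM * S)) * Ψ ∧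
    TP F = Ψi * (TP S + (S * WP - WP * S)) * Ψ ∧
    TM F = Ψi * (TM S + (S * WM - WM * S)) * Ψ := by
  exact ⟨odd_case 𝒜 DP hDP UP Ψ Ψi S F hΨ0 hS hΨΨi hΨiΨ hΨDP hF,
    odd_case 𝒜 DM hDM UM Ψ Ψi S F hΨ0 hS hΨΨi hΨiΨ hΨDM hF,
    even_case 𝒜 XP hXP VP Ψ Ψi S F hΨΨi hΨiΨ hΨXP hF,
    even_case 𝒜 XM hXM VM Ψ Ψi S F hΨΨi hΨiΨ hΨXM hF,
    odd_case 𝒜 TP hTP WP Ψ Ψi S F hΨ0 hS hΨΨi hΨiΨ hΨTP hF,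
    odd_case 𝒜 TM hTM WM Ψ Ψi S F hΨ0 hS hΨΨi hΨiΨ hΨTM hF⟩
end

section
/- Let ∂_λ be an even derivation of A commuting as an operator with D±, D_{x±} and D_{θ±}, let β ∈ A₀ be central with D±β = D_{x±}β = D_{θ±}β = 0, and let Ψ ∈ A₀ be invertible with D±Ψ = U±Ψ, D_{x±}Ψ = V±Ψ, D_{θ±}Ψ = W±Ψ. Then the Sym–Tafel-type immersion function F := β Ψ⁻¹(∂_λΨ) satisfies D±F = Ψ⁻¹(β ∂_λU±)Ψ, D_{x±}F = Ψ⁻¹(β ∂_λV±)Ψ, and D_{θ±}F = Ψ⁻¹(β ∂_λW±)Ψ, where ∂_λU± is determined by ∂_λ(U±Ψ) = (∂_λU±)Ψ + U±(∂_λΨ) and similarly for V±, W±. -/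
open DirectSum in
theorem mem_zero_of_mul_eq_one {ι R σ : Type*} [DecidableEq ι] [AddMonoid ι] [Semiring R]
    [SetLike σ R] [AddSubmonoidClass σ R] (𝒜 : ι → σ) [GradedRing 𝒜] {a b : R}
    (ha : a ∈ 𝒜 0) (hab : a * b = 1) (hba : b * a = 1) : b ∈ 𝒜 0 := by
  have hb : b = (decompose 𝒜 b 0 : R) :=
    calc b = (decompose 𝒜 (b * a) 0 : R) * b := by
          rw [hba, decompose_of_mem_same 𝒜 SetLike.GradedOne.one_mem, one_mul]
      _ = decompose 𝒜 b 0 * (a * b) := by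
          rw [coe_decompose_mul_of_right_mem_zero 𝒜 ha, mul_assoc]
      _ = decompose 𝒜 b 0 := by rw [hab, mul_one]
  exact hb ▸ (decompose 𝒜 b 0).2

theorem IsOddDerivation.map_mul_of_mem_zero_s11 {A : Type*} [Ring A] [Algebra ℂ A]
    {𝒜 : ZMod 2 → Submodule ℂ A} {D : A →ₗ[ℂ] A} (hD : IsOddDerivation 𝒜 D)
    {a : A} (ha : a ∈ 𝒜 0) (b : A) : D (a * b) = D a * b + a * D b := by
  simpa using hD.2 0 a ha b

section SymTafel

variable {ι A σ : Type*} [DecidableEq ι] [AddMonoid ι] [Ring A] [SetLike σ A]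
  [AddSubmonoidClass σ A] (𝒜 : ι → σ) [GradedRing 𝒜] {D dl : A → A}

theorem map_inv_eq_neg_inv_mul
    (hD : ∀ a ∈ 𝒜 0, ∀ b, D (a * b) = D a * b + a * D b) {Ψ Ψi U : A}
    (hΨi : Ψi ∈ 𝒜 0) (hΨΨi : Ψ * Ψi = 1) (hΨiΨ : Ψi * Ψ = 1) (hΨ : D Ψ = U * Ψ) :
    D Ψi = -(Ψi * U) := by
  have hD1 : D 1 = 0 := by simpa using hD 1 SetLike.GradedOne.one_mem 1
  have hsum : D Ψi * Ψ + Ψi * (U * Ψ) = 0 := by rw [← hΨ, ← hD Ψi hΨi, hΨiΨ, hD1]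
  calc D Ψi = D Ψi * (Ψ * Ψi) := by rw [hΨΨi, mul_one]
    _ = (D Ψi * Ψ + Ψi * (U * Ψ)) * Ψi - Ψi * U * (Ψ * Ψi) := by noncomm_ring
    _ = -(Ψi * U) := by rw [hsum, hΨΨi]; noncomm_ring

theorem map_symTafel (hD : ∀ a ∈ 𝒜 0, ∀ b, D (a * b) = D a * b + a * D b)
    (hdl : ∀ a b, dl (a * b) = dl a * b + a * dl b) {β Ψ Ψi U : A}
    (hβ0 : β ∈ 𝒜 0) (hβc : ∀ a, β * a = a * β) (hDβ : D β = 0)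
    (hΨ0 : Ψ ∈ 𝒜 0) (hΨΨi : Ψ * Ψi = 1) (hΨiΨ : Ψi * Ψ = 1)
    (hΨ : D Ψ = U * Ψ) (hcomm : dl (D Ψ) = D (dl Ψ)) :
    D (β * (Ψi * dl Ψ)) = Ψi * (β * dl U) * Ψ := by
  have hΨi0 : Ψi ∈ 𝒜 0 := mem_zero_of_mul_eq_one 𝒜 hΨ0 hΨΨi hΨiΨ
  have hDΨi : D Ψi = -(Ψi * U) := map_inv_eq_neg_inv_mul 𝒜 hD hΨi0 hΨΨi hΨiΨ hΨ
  have hDdlΨ : D (dl Ψ) = dl U * Ψ + U * dl Ψ := by rw [← hcomm, hΨ, hdl]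
  calc D (β * (Ψi * dl Ψ)) = β * (D Ψi * dl Ψ + Ψi * D (dl Ψ)) := by
        rw [hD β hβ0, hDβ, zero_mul, zero_add, hD Ψi hΨi0]
    _ = β * (Ψi * dl U * Ψ) := by rw [hDΨi, hDdlΨ]; noncomm_ring
    _ = Ψi * (β * dl U) * Ψ := by rw [← mul_assoc, ← mul_assoc, hβc Ψi, mul_assoc Ψi]

end SymTafel

theorem stmt11_general {A : Type*} [Ring A] [Algebra ℂ A]
    (𝒜 : ZMod 2 → Submodule ℂ A) [GradedAlgebra 𝒜]
    (DP DM TP TM XP XM : A →ₗ[ℂ] A)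
    (hDP : IsOddDerivation 𝒜 DP) (hDM : IsOddDerivation 𝒜 DM)
    (hTP : IsOddDerivation 𝒜 TP) (hTM : IsOddDerivation 𝒜 TM)
    (hXP : IsEvenDerivation 𝒜 XP) (hXM : IsEvenDerivation 𝒜 XM)
    (UP UM WP WM : A)
    (VP VM : A)
    (dl : A →ₗ[ℂ] A) (hdl : IsEvenDerivation 𝒜 dl)
    (hdlDP : ∀ a, dl (DP a) = DP (dl a)) (hdlDM : ∀ a, dl (DM a) = DM (dl a))
    (hdlXP : ∀ a, dl (XP a) = XP (dl a)) (hdlXM : ∀ a, dl (XM a) = XM (dl a))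
    (hdlTP : ∀ a, dl (TP a) = TP (dl a)) (hdlTM : ∀ a, dl (TM a) = TM (dl a))
    (β : A) (hβ0 : β ∈ 𝒜 0) (hβc : ∀ a : A, β * a = a * β)
    (hβD : DP β = 0 ∧ DM β = 0 ∧ XP β = 0 ∧ XM β = 0 ∧ TP β = 0 ∧ TM β = 0)
    (Ψ Ψi : A) (hΨ0 : Ψ ∈ 𝒜 0) (hΨΨi : Ψ * Ψi = 1) (hΨiΨ : Ψi * Ψ = 1)
    (hΨDP : DP Ψ = UP * Ψ) (hΨDM : DM Ψ = UM * Ψ)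
    (hΨXP : XP Ψ = VP * Ψ) (hΨXM : XM Ψ = VM * Ψ)
    (hΨTP : TP Ψ = WP * Ψ) (hΨTM : TM Ψ = WM * Ψ)
    (F : A) (hF : F = β * (Ψi * dl Ψ)) :
    DP F = Ψi * (β * dl UP) * Ψ ∧
    DM F = Ψi * (β * dl UM) * Ψ ∧
    XP F = Ψi * (β * dl VP) * Ψ ∧
    XM F = Ψi * (β * dl VM) * Ψ ∧
    TP F = Ψi * (β * dl WP) * Ψ ∧
    TM F = Ψi * (β * dl WM) * Ψ := by
  obtain ⟨hβDP, hβDM, hβXP, hβXM, hβTP, hβTM⟩ := hβD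
  have odd {D : A →ₗ[ℂ] A} (hD : IsOddDerivation 𝒜 D) : ∀ a ∈ 𝒜 0, ∀ b,
      D (a * b) = D a * b + a * D b := fun _ ha => hD.map_mul_of_mem_zero_s11 ha
  have even {D : A →ₗ[ℂ] A} (hD : IsEvenDerivation 𝒜 D) : ∀ a ∈ 𝒜 0, ∀ b,
      D (a * b) = D a * b + a * D b := fun a _ => hD.2 a
  subst hF
  exact ⟨map_symTafel 𝒜 (odd hDP) hdl.2 hβ0 hβc hβDP hΨ0 hΨΨi hΨiΨ hΨDP (hdlDP Ψ),
    map_symTafel 𝒜 (odd hDM) hdl.2 hβ0 hβc hβDM hΨ0 hΨΨi hΨiΨ hΨDM (hdlDM Ψ),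
    map_symTafel 𝒜 (even hXP) hdl.2 hβ0 hβc hβXP hΨ0 hΨΨi hΨiΨ hΨXP (hdlXP Ψ),
    map_symTafel 𝒜 (even hXM) hdl.2 hβ0 hβc hβXM hΨ0 hΨΨi hΨiΨ hΨXM (hdlXM Ψ),
    map_symTafel 𝒜 (odd hTP) hdl.2 hβ0 hβc hβTP hΨ0 hΨΨi hΨiΨ hΨTP (hdlTP Ψ),
    map_symTafel 𝒜 (odd hTM) hdl.2 hβ0 hβc hβTM hΨ0 hΨΨi hΨiΨ hΨTM (hdlTM Ψ)⟩

/-- Bosonic Sym–Tafel-type immersion: if `∂_λ` is an even derivation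
commuting with all six derivations, `β ∈ A₀` is central with vanishing derivatives, and
`Ψ ∈ A₀` is invertible and satisfies the three linear spectral problems, then
`F := β Ψ⁻¹(∂_λΨ)` satisfies `D±F = Ψ⁻¹(β ∂_λU±)Ψ`, `D_{x±}F = Ψ⁻¹(β ∂_λV±)Ψ` and
`D_{θ±}F = Ψ⁻¹(β ∂_λW±)Ψ` (here `∂_λU±` is `∂_λ` applied to `U±`, which automatically
satisfies `∂_λ(U±Ψ) = (∂_λU±)Ψ + U±(∂_λΨ)` by the Leibniz rule, and similarly for
`V±`, `W±`). -/
theorem stmt11 {A : Type*} [Ring A] [Algebra ℂ A]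
    (𝒜 : ZMod 2 → Submodule ℂ A) [GradedAlgebra 𝒜]
    (DP DM TP TM XP XM : A →ₗ[ℂ] A)
    (hDP : IsOddDerivation 𝒜 DP) (hDM : IsOddDerivation 𝒜 DM)
    (hTP : IsOddDerivation 𝒜 TP) (hTM : IsOddDerivation 𝒜 TM)
    (hXP : IsEvenDerivation 𝒜 XP) (hXM : IsEvenDerivation 𝒜 XM)
    (UP UM WP WM : A) (hUP : UP ∈ 𝒜 1) (hUM : UM ∈ 𝒜 1)
    (hWP : WP ∈ 𝒜 1) (hWM : WM ∈ 𝒜 1)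
    (VP VM : A) (hVP : VP ∈ 𝒜 0) (hVM : VM ∈ 𝒜 0)
    (dl : A →ₗ[ℂ] A) (hdl : IsEvenDerivation 𝒜 dl)
    (hdlDP : ∀ a, dl (DP a) = DP (dl a)) (hdlDM : ∀ a, dl (DM a) = DM (dl a))
    (hdlXP : ∀ a, dl (XP a) = XP (dl a)) (hdlXM : ∀ a, dl (XM a) = XM (dl a))
    (hdlTP : ∀ a, dl (TP a) = TP (dl a)) (hdlTM : ∀ a, dl (TM a) = TM (dl a))
    (β : A) (hβ0 : β ∈ 𝒜 0) (hβc : ∀ a : A, β * a = a * β)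
    (hβD : DP β = 0 ∧ DM β = 0 ∧ XP β = 0 ∧ XM β = 0 ∧ TP β = 0 ∧ TM β = 0)
    (Ψ Ψi : A) (hΨ0 : Ψ ∈ 𝒜 0) (hΨΨi : Ψ * Ψi = 1) (hΨiΨ : Ψi * Ψ = 1)
    (hΨDP : DP Ψ = UP * Ψ) (hΨDM : DM Ψ = UM * Ψ)
    (hΨXP : XP Ψ = VP * Ψ) (hΨXM : XM Ψ = VM * Ψ)
    (hΨTP : TP Ψ = WP * Ψ) (hΨTM : TM Ψ = WM * Ψ)
    (F : A) (hF : F = β * (Ψi * dl Ψ)) :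
    DP F = Ψi * (β * dl UP) * Ψ ∧
    DM F = Ψi * (β * dl UM) * Ψ ∧
    XP F = Ψi * (β * dl VP) * Ψ ∧
    XM F = Ψi * (β * dl VM) * Ψ ∧
    TP F = Ψi * (β * dl WP) * Ψ ∧
    TM F = Ψi * (β * dl WM) * Ψ :=
  stmt11_general 𝒜 DP DM TP TM XP XM hDP hDM hTP hTM hXP hXM UP UM WP WM VP VM dl hdl hdlDP hdlDM
    hdlXP hdlXM hdlTP hdlTM β hβ0 hβc hβD Ψ Ψi hΨ0 hΨΨi hΨiΨ hΨDP hΨDM hΨXP hΨXM hΨTP hΨTM F hF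
end

section
/- Suppose Ω := D₊U₋ + D₋U₊ − {U₊, U₋} = 0 and that A₊, A₋ ∈ A₁ satisfy the linearized zero-curvature condition D₊A₋ + D₋A₊ − {A₊, U₋} − {A₋, U₊} = 0. Define V± := i(D±U± − U±²), B± := i(D±A± − {U±, A±}), W± := U± + iθ±V±, and C± := A± + iθ±B±. Then the induced linearized conditions hold: D_{x+}B₋ − D_{x−}B₊ + [B₋, V₊] + [V₋, B₊] = 0, and D_{θ+}C₋ + D_{θ−}C₊ − {C₊, W₋} − {C₋, W₊} = 0, where D_{x±} := iD±² and D_{θ±} := D± + iθ±D_{x±}. -/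
/-- If `Ω := D₊U₋ + D₋U₊ − {U₊,U₋} = 0` and `A₊, A₋ ∈ A₁` satisfy the
linearized zero-curvature condition `D₊A₋ + D₋A₊ − {A₊,U₋} − {A₋,U₊} = 0`, then, with
`V± := i(D±U± − U±²)`, `B± := i(D±A± − {U±,A±})`, `W± := U± + iθ±V±`,
`C± := A± + iθ±B±`, `D_{x±} := iD±²` and `D_{θ±} := D± + iθ±D_{x±}`, the induced
linearized conditions hold: `D_{x+}B₋ − D_{x−}B₊ + [B₋,V₊] + [V₋,B₊] = 0` and
`D_{θ+}C₋ + D_{θ−}C₊ − {C₊,W₋} − {C₋,W₊} = 0`. -/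
theorem stmt12 {A : Type*} [Ring A] [Algebra ℂ A]
    (𝒜 : ZMod 2 → Submodule ℂ A) [GradedAlgebra 𝒜]
    (DP DM : A →ₗ[ℂ] A)
    (hDP : IsOddDerivation 𝒜 DP) (hDM : IsOddDerivation 𝒜 DM)
    (hanti : ∀ a, DP (DM a) + DM (DP a) = 0)
    (UP UM : A) (hUP : UP ∈ 𝒜 1) (hUM : UM ∈ 𝒜 1)
    (θP θM : A) (hθP : θP ∈ 𝒜 1) (hθM : θM ∈ 𝒜 1)
    (hθPsq : θP * θP = 0) (hθMsq : θM * θM = 0)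
    (hθPc : Supercommutes 𝒜 θP) (hθMc : Supercommutes 𝒜 θM)
    (XP XM : A → A)
    (hXP : ∀ a, XP a = Complex.I • DP (DP a))
    (hXM : ∀ a, XM a = Complex.I • DM (DM a))
    (hDθ : DP θM = 0 ∧ DM θP = 0 ∧ XP θM = 0 ∧ XM θP = 0)
    (hΩ : DP UM + DM UP - (UP * UM + UM * UP) = 0)
    (AP AM : A) (hAP : AP ∈ 𝒜 1) (hAM : AM ∈ 𝒜 1)
    (hlin : DP AM + DM AP - (AP * UM + UM * AP) - (AM * UP + UP * AM) = 0)
    (VP VM BP BM WP WM CP CM : A)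
    (hVP : VP = Complex.I • (DP UP - UP * UP))
    (hVM : VM = Complex.I • (DM UM - UM * UM))
    (hBP : BP = Complex.I • (DP AP - (UP * AP + AP * UP)))
    (hBM : BM = Complex.I • (DM AM - (UM * AM + AM * UM)))
    (hWP : WP = UP + Complex.I • (θP * VP))
    (hWM : WM = UM + Complex.I • (θM * VM))
    (hCP : CP = AP + Complex.I • (θP * BP))
    (hCM : CM = AM + Complex.I • (θM * BM))
    (TP TM : A → A)
    (hTP : ∀ a, TP a = DP a + Complex.I • (θP * XP a))
    (hTM : ∀ a, TM a = DM a + Complex.I • (θM * XM a)) :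
    (XP BM - XM BP + (BM * VP - VP * BM) + (VM * BP - BP * VM) = 0) ∧
    (TP CM + TM CP - (CP * WM + WM * CP) - (CM * WP + WP * CM) = 0) := by
  obtain ⟨hθ1, hθ2, hθ3, hθ4⟩ := hDθ
  have e2 : (1 + 1 : ZMod 2) = 0 := by decide
  have v1 : ((1 : ZMod 2)).val = 1 := rfl
  have v0 : ((0 : ZMod 2)).val = 0 := rfl
  -- Leibniz helpers
  have oddLP : ∀ x ∈ 𝒜 1, ∀ y, DP (x * y) = DP x * y - x * DP y := by
    intro x hx y
    rw [hDP.2 1 x hx y, v1, pow_one, neg_one_smul, ← sub_eq_add_neg]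
  have oddLM : ∀ x ∈ 𝒜 1, ∀ y, DM (x * y) = DM x * y - x * DM y := by
    intro x hx y
    rw [hDM.2 1 x hx y, v1, pow_one, neg_one_smul, ← sub_eq_add_neg]
  have evenLP : ∀ x ∈ 𝒜 0, ∀ y, DP (x * y) = DP x * y + x * DP y := by
    intro x hx y
    rw [hDP.2 0 x hx y, v0, pow_zero, one_smul]
  have evenLM : ∀ x ∈ 𝒜 0, ∀ y, DM (x * y) = DM x * y + x * DM y := by
    intro x hx y
    rw [hDM.2 0 x hx y, v0, pow_zero, one_smul]
  -- parities of derivatives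
  have hpUP : DP UP ∈ 𝒜 0 := e2 ▸ hDP.1 1 UP hUP
  have hpUM : DP UM ∈ 𝒜 0 := e2 ▸ hDP.1 1 UM hUM
  have hpAP : DP AP ∈ 𝒜 0 := e2 ▸ hDP.1 1 AP hAP
  have hpAM : DP AM ∈ 𝒜 0 := e2 ▸ hDP.1 1 AM hAM
  have hmUP : DM UP ∈ 𝒜 0 := e2 ▸ hDM.1 1 UP hUP
  have hmUM : DM UM ∈ 𝒜 0 := e2 ▸ hDM.1 1 UM hUM
  have hmAP : DM AP ∈ 𝒜 0 := e2 ▸ hDM.1 1 AP hAP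
  have hmAM : DM AM ∈ 𝒜 0 := e2 ▸ hDM.1 1 AM hAM
  -- Leibniz instances
  have lPu := oddLP UP hUP
  have lPv := oddLP UM hUM
  have lPa := oddLP AP hAP
  have lPb := oddLP AM hAM
  have lMu := oddLM UP hUP
  have lMv := oddLM UM hUM
  have lMa := oddLM AP hAP
  have lMb := oddLM AM hAM
  have lPpu := evenLP _ hpUP
  have lPpv := evenLP _ hpUM
  have lPpa := evenLP _ hpAP
  have lPpb := evenLP _ hpAM
  have lPmv := evenLP _ hmUM
  have lPmb := evenLP _ hmAM
  have lPmu := evenLP _ hmUP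
  have lPma := evenLP _ hmAP
  have lMpu := evenLM _ hpUP
  have lMpv := evenLM _ hpUM
  have lMpa := evenLM _ hpAP
  have lMpb := evenLM _ hpAM
  have lMmv := evenLM _ hmUM
  have lMmb := evenLM _ hmAM
  have lMmu := evenLM _ hmUP
  have lMma := evenLM _ hmAP
  have lPθM : ∀ y, DP (θM * y) = -(θM * DP y) := by
    intro y; rw [oddLP θM hθM y, hθ1, zero_mul, zero_sub]
  have lMθP : ∀ y, DM (θP * y) = -(θP * DM y) := by
    intro y; rw [oddLM θP hθP y, hθ2, zero_mul, zero_sub]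
  -- anticommutation of derivations
  have hac : ∀ x, DM (DP x) = -DP (DM x) := by
    intro x
    have h := hanti x
    rw [add_eq_zero_iff_eq_neg] at h
    rw [h, neg_neg]
  -- solved forms of curvature conditions
  have hmu : DM UP = UP * UM + UM * UP - DP UM := by
    rw [← sub_eq_zero,
      show DM UP - (UP * UM + UM * UP - DP UM)
        = DP UM + DM UP - (UP * UM + UM * UP) from by noncomm_ring]
    exact hΩ
  have hma : DM AP = (AP * UM + UM * AP) + (AM * UP + UP * AM) - DP AM := by
    rw [← sub_eq_zero,
      show DM AP - ((AP * UM + UM * AP) + (AM * UP + UP * AM) - DP AM)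
        = DP AM + DM AP - (AP * UM + UM * AP) - (AM * UP + UP * AM) from by noncomm_ring]
    exact hlin
  -- Goal 1
  have hG1 : XP BM - XM BP + (BM * VP - VP * BM) + (VM * BP - BP * VM) = 0 := by
    simp only [hXP, hXM, hBP, hBM, hVP, hVM, map_smul, map_sub, map_add, map_neg,
      hac, hmu, hma, lPu, lPv, lPa, lPb, lMu, lMv, lMa, lMb,
      lPpu, lPpv, lPpa, lPpb, lPmv, lPmb, lPmu, lPma,
      lMpu, lMpv, lMpa, lMpb, lMmv, lMmb, lMmu, lMma,
      smul_smul, Complex.I_mul_I, neg_smul, one_smul,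
      mul_add, add_mul, mul_sub, sub_mul, mul_assoc,
      smul_mul_assoc, mul_smul_comm, smul_sub, smul_add, smul_neg,
      neg_neg, neg_add_rev, neg_sub]
    noncomm_ring
  -- linearized supersymmetric component identities
  have hEPz : XP AM - DM BP - (BP * UM - UM * BP) - (VP * AM - AM * VP) = 0 := by
    simp only [hXP, hXM, hBP, hBM, hVP, hVM, map_smul, map_sub, map_add, map_neg,
      hac, hmu, hma, lPu, lPv, lPa, lPb, lMu, lMv, lMa, lMb,
      lPpu, lPpv, lPpa, lPpb, lPmv, lPmb, lPmu, lPma,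
      lMpu, lMpv, lMpa, lMpb, lMmv, lMmb, lMmu, lMma,
      smul_smul, Complex.I_mul_I, neg_smul, one_smul,
      mul_add, add_mul, mul_sub, sub_mul, mul_assoc,
      smul_mul_assoc, mul_smul_comm, smul_sub, smul_add, smul_neg,
      neg_neg, neg_add_rev, neg_sub]
    noncomm_ring
  have hEMz : XM AP - DP BM - (VM * AP - AP * VM) - (BM * UP - UP * BM) = 0 := by
    simp only [hXP, hXM, hBP, hBM, hVP, hVM, map_smul, map_sub, map_add, map_neg,
      hac, hmu, hma, lPu, lPv, lPa, lPb, lMu, lMv, lMa, lMb,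
      lPpu, lPpv, lPpa, lPpb, lPmv, lPmb, lPmu, lPma,
      lMpu, lMpv, lMpa, lMpb, lMmv, lMmb, lMmu, lMma,
      smul_smul, Complex.I_mul_I, neg_smul, one_smul,
      mul_add, add_mul, mul_sub, sub_mul, mul_assoc,
      smul_mul_assoc, mul_smul_comm, smul_sub, smul_add, smul_neg,
      neg_neg, neg_add_rev, neg_sub]
    noncomm_ring
  -- oriented forms
  have hEP' : XP AM = DM BP + (BP * UM - UM * BP) + (VP * AM - AM * VP) := by
    rw [← sub_eq_zero,
      show XP AM - (DM BP + (BP * UM - UM * BP) + (VP * AM - AM * VP))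
        = XP AM - DM BP - (BP * UM - UM * BP) - (VP * AM - AM * VP) from by noncomm_ring]
    exact hEPz
  have hEM' : XM AP = DP BM + (VM * AP - AP * VM) + (BM * UP - UP * BM) := by
    rw [← sub_eq_zero,
      show XM AP - (DP BM + (VM * AP - AP * VM) + (BM * UP - UP * BM))
        = XM AP - DP BM - (VM * AP - AP * VM) - (BM * UP - UP * BM) from by noncomm_ring]
    exact hEMz
  have hG1' : XP BM = XM BP - (BM * VP - VP * BM) - (VM * BP - BP * VM) := by
    rw [← sub_eq_zero,
      show XP BM - (XM BP - (BM * VP - VP * BM) - (VM * BP - BP * VM))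
        = XP BM - XM BP + (BM * VP - VP * BM) + (VM * BP - BP * VM) from by noncomm_ring]
    exact hG1
  have h0' : DP AM = (AP * UM + UM * AP) + (AM * UP + UP * AM) - DM AP := by
    rw [← sub_eq_zero,
      show DP AM - ((AP * UM + UM * AP) + (AM * UP + UP * AM) - DM AP)
        = DP AM + DM AP - (AP * UM + UM * AP) - (AM * UP + UP * AM) from by noncomm_ring]
    exact hlin
  refine ⟨hG1, ?_⟩
  -- parities of V and B
  have m2 : ∀ x ∈ 𝒜 1, ∀ y ∈ 𝒜 1, x * y ∈ 𝒜 0 := fun x hx y hy =>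
    e2 ▸ SetLike.mul_mem_graded hx hy
  have hVP0 : VP ∈ 𝒜 0 := by
    rw [hVP]; exact Submodule.smul_mem _ _ (sub_mem hpUP (m2 UP hUP UP hUP))
  have hVM0 : VM ∈ 𝒜 0 := by
    rw [hVM]; exact Submodule.smul_mem _ _ (sub_mem hmUM (m2 UM hUM UM hUM))
  have hBP0 : BP ∈ 𝒜 0 := by
    rw [hBP]; exact Submodule.smul_mem _ _ (sub_mem hpAP (add_mem (m2 UP hUP AP hAP) (m2 AP hAP UP hUP)))
  have hBM0 : BM ∈ 𝒜 0 := by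
    rw [hBM]; exact Submodule.smul_mem _ _ (sub_mem hmAM (add_mem (m2 UM hUM AM hAM) (m2 AM hAM UM hUM)))
  -- theta swap lemmas
  have oddSwP : ∀ x ∈ 𝒜 1, x * θP = -(θP * x) := by
    intro x hx
    have h := hθPc 1 x hx
    rw [v1, pow_one, neg_one_smul] at h
    rw [h, neg_neg]
  have oddSwM : ∀ x ∈ 𝒜 1, x * θM = -(θM * x) := by
    intro x hx
    have h := hθMc 1 x hx
    rw [v1, pow_one, neg_one_smul] at h
    rw [h, neg_neg]
  have evenSwP : ∀ x ∈ 𝒜 0, x * θP = θP * x := by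
    intro x hx
    have h := hθPc 0 x hx
    rw [v0, pow_zero, one_smul] at h
    exact h.symm
  have evenSwM : ∀ x ∈ 𝒜 0, x * θM = θM * x := by
    intro x hx
    have h := hθMc 0 x hx
    rw [v0, pow_zero, one_smul] at h
    exact h.symm
  have sAPθM : ∀ y, AP * (θM * y) = -(θM * (AP * y)) := by
    intro y; rw [← mul_assoc, oddSwM AP hAP, neg_mul, mul_assoc]
  have sAMθP : ∀ y, AM * (θP * y) = -(θP * (AM * y)) := by
    intro y; rw [← mul_assoc, oddSwP AM hAM, neg_mul, mul_assoc]
  have sUMθP : ∀ y, UM * (θP * y) = -(θP * (UM * y)) := by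
    intro y; rw [← mul_assoc, oddSwP UM hUM, neg_mul, mul_assoc]
  have sUPθM : ∀ y, UP * (θM * y) = -(θM * (UP * y)) := by
    intro y; rw [← mul_assoc, oddSwM UP hUP, neg_mul, mul_assoc]
  have sBPθM : ∀ y, BP * (θM * y) = θM * (BP * y) := by
    intro y; rw [← mul_assoc, evenSwM BP hBP0, mul_assoc]
  have sBMθP : ∀ y, BM * (θP * y) = θP * (BM * y) := by
    intro y; rw [← mul_assoc, evenSwP BM hBM0, mul_assoc]
  have sVMθP : ∀ y, VM * (θP * y) = θP * (VM * y) := by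
    intro y; rw [← mul_assoc, evenSwP VM hVM0, mul_assoc]
  have sVPθM : ∀ y, VP * (θM * y) = θM * (VP * y) := by
    intro y; rw [← mul_assoc, evenSwM VP hVP0, mul_assoc]
  have sθMθP : ∀ y, θM * (θP * y) = -(θP * (θM * y)) := by
    intro y; rw [← mul_assoc, oddSwP θM hθM, neg_mul, mul_assoc]
  have sAPθM' : AP * θM = -(θM * AP) := oddSwM AP hAP
  have sAMθP' : AM * θP = -(θP * AM) := oddSwP AM hAM
  have sUMθP' : UM * θP = -(θP * UM) := oddSwP UM hUM
  have sUPθM' : UP * θM = -(θM * UP) := oddSwM UP hUP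
  have sBPθM' : BP * θM = θM * BP := evenSwM BP hBP0
  have sBMθP' : BM * θP = θP * BM := evenSwP BM hBM0
  have sVMθP' : VM * θP = θP * VM := evenSwP VM hVM0
  have sVPθM' : VP * θM = θM * VP := evenSwM VP hVP0
  have sθMθP' : θM * θP = -(θP * θM) := oddSwP θM hθM
  -- component expansions
  have hT1 : TP CM = DP AM - Complex.I • (θM * DP BM) + Complex.I • (θP * XP AM)
      - θP * (θM * XP BM) := by
    rw [hTP, hCM]
    simp only [hXP, map_add, map_smul, lPθM, map_neg, smul_neg, smul_smul,
      Complex.I_mul_I, neg_smul, one_smul, mul_add, mul_sub, mul_neg,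
      smul_add, smul_sub, mul_smul_comm, smul_mul_assoc, mul_assoc, neg_neg]
    noncomm_ring
  have hT2 : TM CP = DM AP - Complex.I • (θP * DM BP) + Complex.I • (θM * XM AP)
      + θP * (θM * XM BP) := by
    rw [hTM, hCP]
    simp only [hXM, map_add, map_smul, lMθP, map_neg, smul_neg, smul_smul,
      Complex.I_mul_I, neg_smul, one_smul, mul_add, mul_sub, mul_neg,
      smul_add, smul_sub, mul_smul_comm, smul_mul_assoc, mul_assoc, neg_neg,
      sθMθP, sθMθP']
    noncomm_ring
  have hT3 : CP * WM + WM * CP = (AP * UM + UM * AP)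
      + Complex.I • (θM * (VM * AP - AP * VM))
      + Complex.I • (θP * (BP * UM - UM * BP))
      + θP * (θM * (VM * BP - BP * VM)) := by
    rw [hCP, hWM]
    simp only [mul_add, add_mul, mul_sub, sub_mul, mul_assoc, smul_mul_assoc, mul_smul_comm,
      smul_smul, Complex.I_mul_I, neg_smul, one_smul, smul_add, smul_sub, smul_neg,
      sAPθM, sAPθM', sUMθP, sUMθP', sBPθM, sBPθM', sVMθP, sVMθP', sθMθP, sθMθP',
      mul_neg, neg_mul, neg_neg]
    module
  have hT4 : CM * WP + WP * CM = (AM * UP + UP * AM)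
      + Complex.I • (θP * (VP * AM - AM * VP))
      + Complex.I • (θM * (BM * UP - UP * BM))
      - θP * (θM * (VP * BM - BM * VP)) := by
    rw [hCM, hWP]
    simp only [mul_add, add_mul, mul_sub, sub_mul, mul_assoc, smul_mul_assoc, mul_smul_comm,
      smul_smul, Complex.I_mul_I, neg_smul, one_smul, smul_add, smul_sub, smul_neg,
      sAMθP, sAMθP', sUPθM, sUPθM', sBMθP, sBMθP', sVPθM, sVPθM', sθMθP, sθMθP',
      mul_neg, neg_mul, neg_neg]
    module
  rw [hT1, hT2, hT3, hT4, hG1', hEP', hEM', h0']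
  simp only [mul_add, add_mul, mul_sub, sub_mul, mul_assoc, smul_add, smul_sub,
    smul_neg, mul_neg, neg_mul, neg_neg]
  module
end

section
/- Let Ψ ∈ A₀ be invertible with D±Ψ = U±Ψ, D_{x±}Ψ = V±Ψ and D_{θ±}Ψ = W±Ψ, and let S ∈ A₁ (a fermionic gauge). Then the gauge-deformed immersion function F := Ψ⁻¹SΨ satisfies D±F = Ψ⁻¹(D±S − {S, U±})Ψ, D_{x±}F = Ψ⁻¹(D_{x±}S + [S, V±])Ψ, and D_{θ±}F = Ψ⁻¹(D_{θ±}S − {S, W±})Ψ; equivalently, F solves the tangent equations D±F = −Ψ⁻¹A±Ψ, D_{x±}F = Ψ⁻¹B±Ψ, D_{θ±}F = −Ψ⁻¹C±Ψ of the fermionic Fokas–Gel'fand immersion formula with A± = −D±S + {S,U±}, B± = D_{x±}S + [S,V±], C± = −D_{θ±}S + {S,W±}. -/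
lemma odd_key {A : Type*} [Ring A] [Algebra ℂ A]
    (𝒜 : ZMod 2 → Submodule ℂ A) (D : A →ₗ[ℂ] A) (hD : IsOddDerivation 𝒜 D)
    (U Ψ Ψi S F : A) (hΨ0 : Ψ ∈ 𝒜 0) (hS : S ∈ 𝒜 1)
    (hΨΨi : Ψ * Ψi = 1) (hΨiΨ : Ψi * Ψ = 1)
    (hDΨ : D Ψ = U * Ψ) (hF : F = Ψi * S * Ψ) :
    D F = Ψi * (D S - (S * U + U * S)) * Ψ := by
  have hΨF : Ψ * F = S * Ψ := by
    rw [hF, ← mul_assoc, ← mul_assoc, hΨΨi, one_mul]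
  have h1 := hD.2 0 Ψ hΨ0 F
  have h2 := hD.2 1 S hS Ψ
  rw [hΨF] at h1
  simp only [ZMod.val_zero, ZMod.val_one, pow_zero, pow_one, one_smul, neg_smul] at h1 h2
  have key : Ψ * D F = D S * Ψ - S * (U * Ψ) - U * (S * Ψ) := by
    have h3 : Ψ * D F = D (S * Ψ) - D Ψ * F := by
      rw [h1]; abel
    rw [h3, h2, hDΨ, hF, mul_assoc, mul_assoc, ← mul_assoc Ψ, hΨΨi, one_mul]
    abel
  calc D F = Ψi * (Ψ * D F) := by rw [← mul_assoc, hΨiΨ, one_mul]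
    _ = Ψi * (D S - (S * U + U * S)) * Ψ := by
        rw [key]; noncomm_ring

lemma even_key {A : Type*} [Ring A] [Algebra ℂ A]
    (𝒜 : ZMod 2 → Submodule ℂ A) (D : A →ₗ[ℂ] A) (hD : IsEvenDerivation 𝒜 D)
    (V Ψ Ψi S F : A)
    (hΨΨi : Ψ * Ψi = 1) (hΨiΨ : Ψi * Ψ = 1)
    (hDΨ : D Ψ = V * Ψ) (hF : F = Ψi * S * Ψ) :
    D F = Ψi * (D S + (S * V - V * S)) * Ψ := by
  have hΨF : Ψ * F = S * Ψ := by
    rw [hF, ← mul_assoc, ← mul_assoc, hΨΨi, one_mul]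
  have h1 := hD.2 Ψ F
  have h2 := hD.2 S Ψ
  rw [hΨF] at h1
  have key : Ψ * D F = D S * Ψ + S * (V * Ψ) - V * (S * Ψ) := by
    have h3 : Ψ * D F = D (S * Ψ) - D Ψ * F := by
      rw [h1]; abel
    rw [h3, h2, hDΨ, hF, mul_assoc, mul_assoc, ← mul_assoc Ψ, hΨΨi, one_mul]
  calc D F = Ψi * (Ψ * D F) := by rw [← mul_assoc, hΨiΨ, one_mul]
    _ = Ψi * (D S + (S * V - V * S)) * Ψ := by
        rw [key]; noncomm_ring

/-- Fermionic gauge deformation: if `Ψ ∈ A₀` is invertible and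
satisfies the three linear spectral problems and `S ∈ A₁`, then `F := Ψ⁻¹SΨ` satisfies
`D±F = Ψ⁻¹(D±S − {S,U±})Ψ`, `D_{x±}F = Ψ⁻¹(D_{x±}S + [S,V±])Ψ` and
`D_{θ±}F = Ψ⁻¹(D_{θ±}S − {S,W±})Ψ`; equivalently `D±F = −Ψ⁻¹A±Ψ`,
`D_{x±}F = Ψ⁻¹B±Ψ`, `D_{θ±}F = −Ψ⁻¹C±Ψ` with `A± = −D±S + {S,U±}`,
`B± = D_{x±}S + [S,V±]`, `C± = −D_{θ±}S + {S,W±}`. -/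
theorem stmt16 {A : Type*} [Ring A] [Algebra ℂ A]
    (𝒜 : ZMod 2 → Submodule ℂ A) [GradedAlgebra 𝒜]
    (DP DM TP TM XP XM : A →ₗ[ℂ] A)
    (hDP : IsOddDerivation 𝒜 DP) (hDM : IsOddDerivation 𝒜 DM)
    (hTP : IsOddDerivation 𝒜 TP) (hTM : IsOddDerivation 𝒜 TM)
    (hXP : IsEvenDerivation 𝒜 XP) (hXM : IsEvenDerivation 𝒜 XM)
    (UP UM WP WM : A) (hUP : UP ∈ 𝒜 1) (hUM : UM ∈ 𝒜 1)
    (hWP : WP ∈ 𝒜 1) (hWM : WM ∈ 𝒜 1)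
    (VP VM : A) (hVP : VP ∈ 𝒜 0) (hVM : VM ∈ 𝒜 0)
    (Ψ Ψi : A) (hΨ0 : Ψ ∈ 𝒜 0) (hΨΨi : Ψ * Ψi = 1) (hΨiΨ : Ψi * Ψ = 1)
    (hΨDP : DP Ψ = UP * Ψ) (hΨDM : DM Ψ = UM * Ψ)
    (hΨXP : XP Ψ = VP * Ψ) (hΨXM : XM Ψ = VM * Ψ)
    (hΨTP : TP Ψ = WP * Ψ) (hΨTM : TM Ψ = WM * Ψ)
    (S : A) (hS : S ∈ 𝒜 1)
    (F : A) (hF : F = Ψi * S * Ψ)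
    (AP AM BP BM CP CM : A)
    (hAP : AP = -DP S + (S * UP + UP * S)) (hAM : AM = -DM S + (S * UM + UM * S))
    (hBP : BP = XP S + (S * VP - VP * S)) (hBM : BM = XM S + (S * VM - VM * S))
    (hCP : CP = -TP S + (S * WP + WP * S)) (hCM : CM = -TM S + (S * WM + WM * S)) :
    (DP F = Ψi * (DP S - (S * UP + UP * S)) * Ψ ∧
     DM F = Ψi * (DM S - (S * UM + UM * S)) * Ψ ∧
     XP F = Ψi * (XP S + (S * VP - VP * S)) * Ψ ∧
     XM F = Ψi * (XM S + (S * VM - VM * S)) * Ψ ∧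
     TP F = Ψi * (TP S - (S * WP + WP * S)) * Ψ ∧
     TM F = Ψi * (TM S - (S * WM + WM * S)) * Ψ) ∧
    (DP F = -(Ψi * AP * Ψ) ∧ DM F = -(Ψi * AM * Ψ) ∧
     XP F = Ψi * BP * Ψ ∧ XM F = Ψi * BM * Ψ ∧
     TP F = -(Ψi * CP * Ψ) ∧ TM F = -(Ψi * CM * Ψ)) := by
  have e1 := odd_key 𝒜 DP hDP UP Ψ Ψi S F hΨ0 hS hΨΨi hΨiΨ hΨDP hF
  have e2 := odd_key 𝒜 DM hDM UM Ψ Ψi S F hΨ0 hS hΨΨi hΨiΨ hΨDM hF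
  have e3 := even_key 𝒜 XP hXP VP Ψ Ψi S F hΨΨi hΨiΨ hΨXP hF
  have e4 := even_key 𝒜 XM hXM VM Ψ Ψi S F hΨΨi hΨiΨ hΨXM hF
  have e5 := odd_key 𝒜 TP hTP WP Ψ Ψi S F hΨ0 hS hΨΨi hΨiΨ hΨTP hF
  have e6 := odd_key 𝒜 TM hTM WM Ψ Ψi S F hΨ0 hS hΨΨi hΨiΨ hΨTM hF
  refine ⟨⟨e1, e2, e3, e4, e5, e6⟩, ?_, ?_, ?_, ?_, ?_, ?_⟩ <;>
    simp only [e1, e2, e3, e4, e5, e6, hAP, hAM, hBP, hBM, hCP, hCM] <;> noncomm_ring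
end

section
/- Let ∂_λ be an even derivation of A commuting as an operator with D±, D_{x±} and D_{θ±}, let β ∈ A₁ satisfy β a = (−1)^i a β for every homogeneous a ∈ A_i and D±β = D_{x±}β = D_{θ±}β = 0, and let Ψ ∈ A₀ be invertible with D±Ψ = U±Ψ, D_{x±}Ψ = V±Ψ, D_{θ±}Ψ = W±Ψ. Then the fermionic Sym–Tafel-type immersion function F := β Ψ⁻¹(∂_λΨ) satisfies D±F = −Ψ⁻¹(β ∂_λU±)Ψ, D_{x±}F = Ψ⁻¹(β ∂_λV±)Ψ, and D_{θ±}F = −Ψ⁻¹(β ∂_λW±)Ψ, where ∂_λU± is determined by ∂_λ(U±Ψ) = (∂_λU±)Ψ + U±(∂_λΨ) and similarly for V±, W±. -/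
lemma stmt17_aux_comm {A : Type*} [Ring A] [Algebra ℂ A]
    (𝒜 : ZMod 2 → Submodule ℂ A) {β Ψ Ψi : A}
    (hβc : Supercommutes 𝒜 β) (hΨ0 : Ψ ∈ 𝒜 0)
    (hΨΨi : Ψ * Ψi = 1) (hΨiΨ : Ψi * Ψ = 1) : β * Ψi = Ψi * β := by
  have h : β * Ψ = Ψ * β := by
    have := hβc 0 Ψ hΨ0
    simpa [ZMod.val_zero] using this
  calc β * Ψi = Ψi * Ψ * (β * Ψi) := by rw [hΨiΨ, one_mul]
    _ = Ψi * ((Ψ * β) * Ψi) := by rw [mul_assoc, ← mul_assoc Ψ β Ψi]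
    _ = Ψi * (β * (Ψ * Ψi)) := by rw [← h, mul_assoc]
    _ = Ψi * β := by rw [hΨΨi, mul_one]

lemma stmt17_inner {A : Type*} [Ring A] [Algebra ℂ A]
    (D dl : A →ₗ[ℂ] A)
    (hdl2 : ∀ a b : A, dl (a * b) = dl a * b + a * dl b)
    (hcomm : ∀ a, dl (D a) = D (dl a))
    {Ψ Ψi U : A} (hΨΨi : Ψ * Ψi = 1) (hΨiΨ : Ψi * Ψ = 1)
    (hΨD : D Ψ = U * Ψ)
    (hLeib : ∀ b : A, D (Ψ * b) = D Ψ * b + Ψ * D b) :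
    D (Ψi * dl Ψ) = Ψi * (dl U * Ψ) := by
  have h1 : D (Ψ * (Ψi * dl Ψ)) = D Ψ * (Ψi * dl Ψ) + Ψ * D (Ψi * dl Ψ) :=
    hLeib _
  have h2 : Ψ * (Ψi * dl Ψ) = dl Ψ := by rw [← mul_assoc, hΨΨi, one_mul]
  have h3 : D (dl Ψ) = dl U * Ψ + U * dl Ψ := by
    rw [← hcomm, hΨD, hdl2]
  have h4 : Ψ * D (Ψi * dl Ψ) = dl U * Ψ := by
    have h5 : D Ψ * (Ψi * dl Ψ) = U * dl Ψ := by
      rw [hΨD, mul_assoc, ← mul_assoc Ψ Ψi, hΨΨi, one_mul]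
    rw [h2, h3, h5] at h1
    exact (add_left_cancel ((add_comm (dl U * Ψ) (U * dl Ψ)).symm.trans h1)).symm
  calc D (Ψi * dl Ψ) = Ψi * Ψ * D (Ψi * dl Ψ) := by rw [hΨiΨ, one_mul]
    _ = Ψi * (dl U * Ψ) := by rw [mul_assoc, h4]

lemma stmt17_odd {A : Type*} [Ring A] [Algebra ℂ A]
    (𝒜 : ZMod 2 → Submodule ℂ A)
    (D dl : A →ₗ[ℂ] A)
    (hdl2 : ∀ a b : A, dl (a * b) = dl a * b + a * dl b)
    (hcomm : ∀ a, dl (D a) = D (dl a))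
    {Ψ Ψi U β F : A} (hΨ0 : Ψ ∈ 𝒜 0)
    (hΨΨi : Ψ * Ψi = 1) (hΨiΨ : Ψi * Ψ = 1)
    (hΨD : D Ψ = U * Ψ)
    (hβ1 : β ∈ 𝒜 1) (hβΨi : β * Ψi = Ψi * β) (hDβ : D β = 0)
    (hD : IsOddDerivation 𝒜 D)
    (hF : F = β * (Ψi * dl Ψ)) :
    D F = -(Ψi * (β * dl U) * Ψ) := by
  have hLeib : ∀ b : A, D (Ψ * b) = D Ψ * b + Ψ * D b := by
    intro b
    have := hD.2 0 Ψ hΨ0 b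
    simpa [ZMod.val_zero] using this
  have hin : D (Ψi * dl Ψ) = Ψi * (dl U * Ψ) :=
    stmt17_inner D dl hdl2 hcomm hΨΨi hΨiΨ hΨD hLeib
  have hout : D (β * (Ψi * dl Ψ)) =
      D β * (Ψi * dl Ψ) + ((-1 : ℂ) ^ (1 : ZMod 2).val) • (β * D (Ψi * dl Ψ)) :=
    hD.2 1 β hβ1 _
  have hval : ((1 : ZMod 2).val) = 1 := rfl
  rw [hF, hout, hDβ, zero_mul, zero_add, hval, pow_one, neg_one_smul, hin,
    ← mul_assoc, hβΨi, mul_assoc, ← mul_assoc β, mul_assoc Ψi, ← mul_assoc]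

lemma stmt17_even {A : Type*} [Ring A] [Algebra ℂ A]
    (𝒜 : ZMod 2 → Submodule ℂ A)
    (D dl : A →ₗ[ℂ] A)
    (hdl2 : ∀ a b : A, dl (a * b) = dl a * b + a * dl b)
    (hcomm : ∀ a, dl (D a) = D (dl a))
    {Ψ Ψi U β F : A}
    (hΨΨi : Ψ * Ψi = 1) (hΨiΨ : Ψi * Ψ = 1)
    (hΨD : D Ψ = U * Ψ)
    (hβΨi : β * Ψi = Ψi * β) (hDβ : D β = 0)
    (hD2 : ∀ a b : A, D (a * b) = D a * b + a * D b)
    (hF : F = β * (Ψi * dl Ψ)) :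
    D F = Ψi * (β * dl U) * Ψ := by
  have hin : D (Ψi * dl Ψ) = Ψi * (dl U * Ψ) :=
    stmt17_inner D dl hdl2 hcomm hΨΨi hΨiΨ hΨD (fun b => hD2 Ψ b)
  rw [hF, hD2, hDβ, zero_mul, zero_add, hin,
    ← mul_assoc, hβΨi, mul_assoc, ← mul_assoc β, mul_assoc Ψi, ← mul_assoc]

/-- Fermionic Sym–Tafel-type immersion: if `∂_λ` is an even derivation
commuting with all six derivations, `β ∈ A₁` supercommutes with homogeneous elements and
has vanishing derivatives, and `Ψ ∈ A₀` is invertible and satisfies the three linear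
spectral problems, then `F := β Ψ⁻¹(∂_λΨ)` satisfies `D±F = −Ψ⁻¹(β ∂_λU±)Ψ`,
`D_{x±}F = Ψ⁻¹(β ∂_λV±)Ψ` and `D_{θ±}F = −Ψ⁻¹(β ∂_λW±)Ψ` (here `∂_λU±` is `∂_λ`
applied to `U±`, which automatically satisfies `∂_λ(U±Ψ) = (∂_λU±)Ψ + U±(∂_λΨ)` by the
Leibniz rule, and similarly for `V±`, `W±`). -/
theorem stmt17 {A : Type*} [Ring A] [Algebra ℂ A]
    (𝒜 : ZMod 2 → Submodule ℂ A) [GradedAlgebra 𝒜]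
    (DP DM TP TM XP XM : A →ₗ[ℂ] A)
    (hDP : IsOddDerivation 𝒜 DP) (hDM : IsOddDerivation 𝒜 DM)
    (hTP : IsOddDerivation 𝒜 TP) (hTM : IsOddDerivation 𝒜 TM)
    (hXP : IsEvenDerivation 𝒜 XP) (hXM : IsEvenDerivation 𝒜 XM)
    (UP UM WP WM : A) (hUP : UP ∈ 𝒜 1) (hUM : UM ∈ 𝒜 1)
    (hWP : WP ∈ 𝒜 1) (hWM : WM ∈ 𝒜 1)
    (VP VM : A) (hVP : VP ∈ 𝒜 0) (hVM : VM ∈ 𝒜 0)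
    (dl : A →ₗ[ℂ] A) (hdl : IsEvenDerivation 𝒜 dl)
    (hdlDP : ∀ a, dl (DP a) = DP (dl a)) (hdlDM : ∀ a, dl (DM a) = DM (dl a))
    (hdlXP : ∀ a, dl (XP a) = XP (dl a)) (hdlXM : ∀ a, dl (XM a) = XM (dl a))
    (hdlTP : ∀ a, dl (TP a) = TP (dl a)) (hdlTM : ∀ a, dl (TM a) = TM (dl a))
    (β : A) (hβ1 : β ∈ 𝒜 1) (hβc : Supercommutes 𝒜 β)
    (hβD : DP β = 0 ∧ DM β = 0 ∧ XP β = 0 ∧ XM β = 0 ∧ TP β = 0 ∧ TM β = 0)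
    (Ψ Ψi : A) (hΨ0 : Ψ ∈ 𝒜 0) (hΨΨi : Ψ * Ψi = 1) (hΨiΨ : Ψi * Ψ = 1)
    (hΨDP : DP Ψ = UP * Ψ) (hΨDM : DM Ψ = UM * Ψ)
    (hΨXP : XP Ψ = VP * Ψ) (hΨXM : XM Ψ = VM * Ψ)
    (hΨTP : TP Ψ = WP * Ψ) (hΨTM : TM Ψ = WM * Ψ)
    (F : A) (hF : F = β * (Ψi * dl Ψ)) :
    DP F = -(Ψi * (β * dl UP) * Ψ) ∧
    DM F = -(Ψi * (β * dl UM) * Ψ) ∧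
    XP F = Ψi * (β * dl VP) * Ψ ∧
    XM F = Ψi * (β * dl VM) * Ψ ∧
    TP F = -(Ψi * (β * dl WP) * Ψ) ∧
    TM F = -(Ψi * (β * dl WM) * Ψ) := by
  obtain ⟨hb1, hb2, hb3, hb4, hb5, hb6⟩ := hβD
  have hβΨi : β * Ψi = Ψi * β :=
    stmt17_aux_comm 𝒜 hβc hΨ0 hΨΨi hΨiΨ
  refine ⟨?_, ?_, ?_, ?_, ?_, ?_⟩
  · exact stmt17_odd 𝒜 DP dl hdl.2 hdlDP hΨ0 hΨΨi hΨiΨ hΨDP hβ1 hβΨi hb1 hDP hF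
  · exact stmt17_odd 𝒜 DM dl hdl.2 hdlDM hΨ0 hΨΨi hΨiΨ hΨDM hβ1 hβΨi hb2 hDM hF
  · exact stmt17_even 𝒜 XP dl hdl.2 hdlXP hΨΨi hΨiΨ hΨXP hβΨi hb3 hXP.2 hF
  · exact stmt17_even 𝒜 XM dl hdl.2 hdlXM hΨΨi hΨiΨ hΨXM hβΨi hb4 hXM.2 hF
  · exact stmt17_odd 𝒜 TP dl hdl.2 hdlTP hΨ0 hΨΨi hΨiΨ hΨTP hβ1 hβΨi hb5 hTP hF
  · exact stmt17_odd 𝒜 TM dl hdl.2 hdlTM hΨ0 hΨΨi hΨiΨ hΨTM hβ1 hβΨi hb6 hTM hF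
end

section
/- Suppose Ω := D₊U₋ + D₋U₊ − {U₊, U₋} = 0 and that A₊, A₋ ∈ A₀ satisfy the fermionic linearized zero-curvature condition D₊A₋ + D₋A₊ + [A₊, U₋] + [A₋, U₊] = 0. Define V± := i(D±U± − U±²), B± := −i(D±A± + [A±, U±]), W± := U± + iθ±V±, and C± := A± − iθ±B±. Then the induced linearized conditions hold: D_{x+}B₋ − D_{x−}B₊ + [B₋, V₊] + [V₋, B₊] = 0, and D_{θ+}C₋ + D_{θ−}C₊ + [C₋, W₊] + [C₊, W₋] = 0, where D_{x±} := iD±² and D_{θ±} := D± + iθ±D_{x±}. -/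
set_option maxHeartbeats 4000000 in
/-- If `Ω := D₊U₋ + D₋U₊ − {U₊,U₋} = 0` and `A₊, A₋ ∈ A₀` satisfy the
fermionic linearized zero-curvature condition `D₊A₋ + D₋A₊ + [A₊,U₋] + [A₋,U₊] = 0`,
then, with `V± := i(D±U± − U±²)`, `B± := −i(D±A± + [A±,U±])`, `W± := U± + iθ±V±`,
`C± := A± − iθ±B±`, `D_{x±} := iD±²` and `D_{θ±} := D± + iθ±D_{x±}`, the induced
linearized conditions hold: `D_{x+}B₋ − D_{x−}B₊ + [B₋,V₊] + [V₋,B₊] = 0` and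
`D_{θ+}C₋ + D_{θ−}C₊ + [C₋,W₊] + [C₊,W₋] = 0`. -/
theorem stmt18 {A : Type*} [Ring A] [Algebra ℂ A]
    (𝒜 : ZMod 2 → Submodule ℂ A) [GradedAlgebra 𝒜]
    (DP DM : A →ₗ[ℂ] A)
    (hDP : IsOddDerivation 𝒜 DP) (hDM : IsOddDerivation 𝒜 DM)
    (hanti : ∀ a, DP (DM a) + DM (DP a) = 0)
    (UP UM : A) (hUP : UP ∈ 𝒜 1) (hUM : UM ∈ 𝒜 1)
    (θP θM : A) (hθP : θP ∈ 𝒜 1) (hθM : θM ∈ 𝒜 1)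
    (hθPsq : θP * θP = 0) (hθMsq : θM * θM = 0)
    (hθPc : Supercommutes 𝒜 θP) (hθMc : Supercommutes 𝒜 θM)
    (XP XM : A → A)
    (hXP : ∀ a, XP a = Complex.I • DP (DP a))
    (hXM : ∀ a, XM a = Complex.I • DM (DM a))
    (hDθ : DP θM = 0 ∧ DM θP = 0 ∧ XP θM = 0 ∧ XM θP = 0)
    (hΩ : DP UM + DM UP - (UP * UM + UM * UP) = 0)
    (AP AM : A) (hAP : AP ∈ 𝒜 0) (hAM : AM ∈ 𝒜 0)
    (hlin : DP AM + DM AP + (AP * UM - UM * AP) + (AM * UP - UP * AM) = 0)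
    (VP VM BP BM WP WM CP CM : A)
    (hVP : VP = Complex.I • (DP UP - UP * UP))
    (hVM : VM = Complex.I • (DM UM - UM * UM))
    (hBP : BP = (-Complex.I) • (DP AP + (AP * UP - UP * AP)))
    (hBM : BM = (-Complex.I) • (DM AM + (AM * UM - UM * AM)))
    (hWP : WP = UP + Complex.I • (θP * VP))
    (hWM : WM = UM + Complex.I • (θM * VM))
    (hCP : CP = AP - Complex.I • (θP * BP))
    (hCM : CM = AM - Complex.I • (θM * BM))
    (TP TM : A → A)
    (hTP : ∀ a, TP a = DP a + Complex.I • (θP * XP a))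
    (hTM : ∀ a, TM a = DM a + Complex.I • (θM * XM a)) :
    (XP BM - XM BP + (BM * VP - VP * BM) + (VM * BP - BP * VM) = 0) ∧
    (TP CM + TM CP + (CM * WP - WP * CM) + (CP * WM - WM * CP) = 0) := by
  obtain ⟨hdθM, heθP, hXθM, hXθP⟩ := hDθ
  -- parity bookkeeping helpers
  have mP0 : ∀ x ∈ 𝒜 0, DP x ∈ 𝒜 1 := fun x hx => by
    have h := hDP.1 0 x hx
    rwa [show ((0 : ZMod 2) + 1) = 1 from by decide] at h
  have mP1 : ∀ x ∈ 𝒜 1, DP x ∈ 𝒜 0 := fun x hx => by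
    have h := hDP.1 1 x hx
    rwa [show ((1 : ZMod 2) + 1) = 0 from by decide] at h
  have mM0 : ∀ x ∈ 𝒜 0, DM x ∈ 𝒜 1 := fun x hx => by
    have h := hDM.1 0 x hx
    rwa [show ((0 : ZMod 2) + 1) = 1 from by decide] at h
  have mM1 : ∀ x ∈ 𝒜 1, DM x ∈ 𝒜 0 := fun x hx => by
    have h := hDM.1 1 x hx
    rwa [show ((1 : ZMod 2) + 1) = 0 from by decide] at h
  -- Leibniz rules specialised to even/odd left factors
  have val0 : ((0 : ZMod 2)).val = 0 := rfl
  have val1 : ((1 : ZMod 2)).val = 1 := rfl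
  have LP0 : ∀ x ∈ 𝒜 0, ∀ y, DP (x * y) = DP x * y + x * DP y := by
    intro x hx y
    have h := hDP.2 0 x hx y
    rwa [val0, pow_zero, one_smul] at h
  have LP1 : ∀ x ∈ 𝒜 1, ∀ y, DP (x * y) = DP x * y - x * DP y := by
    intro x hx y
    have h := hDP.2 1 x hx y
    rwa [val1, pow_one, neg_one_smul, ← sub_eq_add_neg] at h
  have LM0 : ∀ x ∈ 𝒜 0, ∀ y, DM (x * y) = DM x * y + x * DM y := by
    intro x hx y
    have h := hDM.2 0 x hx y
    rwa [val0, pow_zero, one_smul] at h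
  have LM1 : ∀ x ∈ 𝒜 1, ∀ y, DM (x * y) = DM x * y - x * DM y := by
    intro x hx y
    have h := hDM.2 1 x hx y
    rwa [val1, pow_one, neg_one_smul, ← sub_eq_add_neg] at h
  -- the central imaginary unit J
  set J : A := algebraMap ℂ A Complex.I with hJdef
  have hsm : ∀ x : A, Complex.I • x = J * x := fun x => Algebra.smul_def _ _
  have hJt : ∀ x : A, x * J = J * x := fun x => (Algebra.commutes _ _).symm
  have hJc : ∀ x y : A, x * (J * y) = J * (x * y) := fun x y => by
    rw [← mul_assoc, hJt x, mul_assoc]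
  have hJJ : ∀ x : A, J * (J * x) = -x := fun x => by
    rw [← mul_assoc, hJdef, ← map_mul, Complex.I_mul_I, map_neg, map_one, neg_one_mul]
  have hdJ : ∀ x : A, DP (J * x) = J * DP x := fun x => by
    rw [← hsm, map_smul, hsm]
  have heJ : ∀ x : A, DM (J * x) = J * DM x := fun x => by
    rw [← hsm, map_smul, hsm]
  -- anticommutativity of the two odd derivations
  have hde : ∀ x, DP (DM x) = -(DM (DP x)) := fun x =>
    eq_neg_of_add_eq_zero_left (hanti x)
  -- solve the zero-curvature conditions for DP UM and DP AM
  have hdv' : DP UM = UP * UM + UM * UP - DM UP := by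
    have h : DP UM - (UP * UM + UM * UP - DM UP) = 0 := by
      calc DP UM - (UP * UM + UM * UP - DM UP)
          = DP UM + DM UP - (UP * UM + UM * UP) := by noncomm_ring
        _ = 0 := hΩ
    exact sub_eq_zero.mp h
  have hdb' : DP AM = -(DM AP) - (AP * UM - UM * AP) - (AM * UP - UP * AM) := by
    have h : DP AM - (-(DM AP) - (AP * UM - UM * AP) - (AM * UP - UP * AM)) = 0 := by
      calc DP AM - (-(DM AP) - (AP * UM - UM * AP) - (AM * UP - UP * AM))
          = DP AM + DM AP + (AP * UM - UM * AP) + (AM * UP - UP * AM) := by noncomm_ring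
        _ = 0 := hlin
    exact sub_eq_zero.mp h
  -- Leibniz instances for all atoms that occur as left factors
  have rd_a := LP0 AP hAP
  have rd_b := LP0 AM hAM
  have rd_u := LP1 UP hUP
  have rd_v := LP1 UM hUM
  have rd_ea := LP1 (DM AP) (mM0 AP hAP)
  have rd_eb := LP1 (DM AM) (mM0 AM hAM)
  have rd_eu := LP0 (DM UP) (mM1 UP hUP)
  have rd_ev := LP0 (DM UM) (mM1 UM hUM)
  have rd_tm : ∀ y, DP (θM * y) = -(θM * DP y) := fun y => by
    rw [LP1 θM hθM y, hdθM, zero_mul, zero_sub]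
  have re_a := LM0 AP hAP
  have re_b := LM0 AM hAM
  have re_u := LM1 UP hUP
  have re_v := LM1 UM hUM
  have re_ea := LM1 (DM AP) (mM0 AP hAP)
  have re_eu := LM0 (DM UP) (mM1 UP hUP)
  have re_da := LM1 (DP AP) (mP0 AP hAP)
  have re_du := LM0 (DP UP) (mP1 UP hUP)
  have re_tp : ∀ y, DM (θP * y) = -(θP * DM y) := fun y => by
    rw [LM1 θP hθP y, heθP, zero_mul, zero_sub]
  -- moving θ's to the left
  have mv0 : ∀ θ : A, Supercommutes 𝒜 θ → ∀ x ∈ 𝒜 0,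
      (∀ y, x * (θ * y) = θ * (x * y)) ∧ x * θ = θ * x := by
    intro θ hθc x hx
    have h : θ * x = x * θ := by
      have h0 := hθc 0 x hx
      rwa [val0, pow_zero, one_smul] at h0
    exact ⟨fun y => by rw [← mul_assoc, ← h, mul_assoc], h.symm⟩
  have mv1 : ∀ θ : A, Supercommutes 𝒜 θ → ∀ x ∈ 𝒜 1,
      (∀ y, x * (θ * y) = -(θ * (x * y))) ∧ x * θ = -(θ * x) := by
    intro θ hθc x hx
    have h : θ * x = -(x * θ) := by
      have h1 := hθc 1 x hx
      rwa [val1, pow_one, neg_one_smul] at h1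
    have h2 : x * θ = -(θ * x) := by rw [h, neg_neg]
    exact ⟨fun y => by rw [← mul_assoc, h2, neg_mul, mul_assoc], h2⟩
  obtain ⟨tPa, tPa'⟩ := mv0 θP hθPc AP hAP
  obtain ⟨tPb, tPb'⟩ := mv0 θP hθPc AM hAM
  obtain ⟨tPdu, tPdu'⟩ := mv0 θP hθPc (DP UP) (mP1 UP hUP)
  obtain ⟨tPev, tPev'⟩ := mv0 θP hθPc (DM UM) (mM1 UM hUM)
  obtain ⟨tPu, tPu'⟩ := mv1 θP hθPc UP hUP
  obtain ⟨tPv, tPv'⟩ := mv1 θP hθPc UM hUM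
  obtain ⟨tPda, tPda'⟩ := mv1 θP hθPc (DP AP) (mP0 AP hAP)
  obtain ⟨tPeb, tPeb'⟩ := mv1 θP hθPc (DM AM) (mM0 AM hAM)
  obtain ⟨tMa, tMa'⟩ := mv0 θM hθMc AP hAP
  obtain ⟨tMb, tMb'⟩ := mv0 θM hθMc AM hAM
  obtain ⟨tMdu, tMdu'⟩ := mv0 θM hθMc (DP UP) (mP1 UP hUP)
  obtain ⟨tMev, tMev'⟩ := mv0 θM hθMc (DM UM) (mM1 UM hUM)
  obtain ⟨tMu, tMu'⟩ := mv1 θM hθMc UP hUP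
  obtain ⟨tMv, tMv'⟩ := mv1 θM hθMc UM hUM
  obtain ⟨tMda, tMda'⟩ := mv1 θM hθMc (DP AP) (mP0 AP hAP)
  obtain ⟨tMeb, tMeb'⟩ := mv1 θM hθMc (DM AM) (mM0 AM hAM)
  -- products of θ's
  have hPPy : ∀ y : A, θP * (θP * y) = 0 := fun y => by
    rw [← mul_assoc, hθPsq, zero_mul]
  have hMMy : ∀ y : A, θM * (θM * y) = 0 := fun y => by
    rw [← mul_assoc, hθMsq, zero_mul]
  have hMPt : θM * θP = -(θP * θM) := by
    have h1 := hθMc 1 θP hθP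
    rwa [val1, pow_one, neg_one_smul] at h1
  have hMPy : ∀ y : A, θM * (θP * y) = -(θP * (θM * y)) := fun y => by
    rw [← mul_assoc, hMPt, neg_mul, mul_assoc]
  constructor
  · simp only [hXP, hXM, hBP, hBM, hVP, hVM, neg_smul, hsm, map_add, map_sub, map_neg,
      map_zero, hde, hdb', hdv', rd_a, rd_b, rd_u, rd_v, rd_ea, rd_eb, rd_eu, rd_ev,
      rd_tm, re_a, re_b, re_u, re_v, re_ea, re_eu, re_da, re_du, re_tp, hdJ, heJ,
      hJc, hJJ, hJt, mul_add, add_mul, mul_sub, sub_mul, mul_neg, neg_mul, mul_assoc,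
      neg_neg, zero_mul, mul_zero, add_zero, zero_add, neg_zero]
    noncomm_ring
  · simp only [hTP, hTM, hXP, hXM, hCP, hCM, hWP, hWM, hBP, hBM, hVP, hVM, neg_smul,
      hsm, map_add, map_sub, map_neg, map_zero, hde, hdb', hdv', hdθM, heθP,
      rd_a, rd_b, rd_u, rd_v, rd_ea, rd_eb, rd_eu, rd_ev, rd_tm,
      re_a, re_b, re_u, re_v, re_ea, re_eu, re_da, re_du, re_tp, hdJ, heJ,
      hJc, hJJ, hJt, mul_add, add_mul, mul_sub, sub_mul, mul_neg, neg_mul, mul_assoc,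
      neg_neg, zero_mul, mul_zero, add_zero, zero_add, neg_zero,
      tPa, tPa', tPb, tPb', tPdu, tPdu', tPev, tPev', tPu, tPu', tPv, tPv',
      tPda, tPda', tPeb, tPeb', tMa, tMa', tMb, tMb', tMdu, tMdu', tMev, tMev',
      tMu, tMu', tMv, tMv', tMda, tMda', tMeb, tMeb',
      hPPy, hMMy, hMPy, hMPt, hθPsq, hθMsq]
    noncomm_ring
end
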